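/- arXiv:math/9803005 — 2 statements merged into one kernel-verified Lean document; each statement's English description precedes it below -/
import Mathlib

section
/- Let (A, Δ) be a regular multiplier Hopf algebra acting on an algebra R as a left A-module algebra, and suppose the action is inner, i.e., there is a unital algebra homomorphism γ : A → M(R) (meaning γ(A)R = Rγ(A) = R) such that ax = Σ γ(a₍₁₎) x γ(S(a₍₂₎)) for all a ∈ A and x ∈ R. Then the smash product R # A is isomorphic as an algebra to R ⊗ A with the ordinary tensor product algebra structure; an isomorphism is given by x # a ↦ Σ xγ(a₍₁₎) ⊗ a₍₂₎, with inverse x ⊗ a ↦ Σ xγ(S(a₍₁₎)) # a₍₂₎. -/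
/-! # A framework for (regular) multiplier Hopf algebras, following
Drabant–Van Daele–Zhang, "Actions of Multiplier Hopf Algebras".

Algebras are (possibly non-unital) associative algebras over `ℂ` with
non-degenerate product.  A multiplier of such an algebra (whose multiplication
is recorded as a bilinear map `mul`) is a pair `(L, R)` of linear maps with
`L (x*y) = L x * y`, `R (x*y) = x * R y` and `x * L y = R x * y`; this is the
standard description of the multiplier algebra `M(A)`.

A regular multiplier Hopf algebra is recorded by the comultiplication
`Δ : A → M(A ⊗ A)` together with the four canonical maps
`T1 a b = Δ(a)(1 ⊗ b)`, `T2 a b = (a ⊗ 1)Δ(b)`, `T3 a b = Δ(a)(b ⊗ 1)`,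
`T4 a b = (1 ⊗ a)Δ(b)` (all with values in `A ⊗ A`), which are required to be
bijective as maps of `A ⊗ A`; together with the counit and the (bijective)
antipode satisfying the usual axioms, expressed in covered (Sweedler) form. -/

open scoped TensorProduct
open TensorProduct LinearMap

noncomputable section

/-! ## Multipliers -/

section MulPair

variable {X : Type*} [AddCommGroup X] [Module ℂ X]

/-- A multiplier of the (possibly non-unital) algebra `(X, mul)`. -/
@[ext]
structure MulPair (mul : X →ₗ[ℂ] X →ₗ[ℂ] X) : Type _ where
  L : X →ₗ[ℂ] X
  R : X →ₗ[ℂ] X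
  L_mul : ∀ x y : X, L (mul x y) = mul (L x) y
  R_mul : ∀ x y : X, R (mul x y) = mul x (R y)
  middle : ∀ x y : X, mul x (L y) = mul (R x) y

namespace MulPair

variable {mul : X →ₗ[ℂ] X →ₗ[ℂ] X}

instance : One (MulPair mul) :=
  ⟨⟨LinearMap.id, LinearMap.id, fun _ _ => rfl, fun _ _ => rfl, fun _ _ => rfl⟩⟩

@[simp] theorem one_L : (1 : MulPair mul).L = LinearMap.id := rfl
@[simp] theorem one_R : (1 : MulPair mul).R = LinearMap.id := rfl

instance : Mul (MulPair mul) :=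
  ⟨fun m n =>
    ⟨m.L ∘ₗ n.L, n.R ∘ₗ m.R,
      fun x y => by simp [n.L_mul, m.L_mul],
      fun x y => by simp [m.R_mul, n.R_mul],
      fun x y => by simp [m.middle, n.middle]⟩⟩

@[simp] theorem mul_L (m n : MulPair mul) : (m * n).L = m.L ∘ₗ n.L := rfl
@[simp] theorem mul_R (m n : MulPair mul) : (m * n).R = n.R ∘ₗ m.R := rfl

instance : Zero (MulPair mul) :=
  ⟨⟨0, 0, fun x y => by simp, fun x y => by simp, fun x y => by simp⟩⟩

@[simp] theorem zero_L : (0 : MulPair mul).L = 0 := rfl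
@[simp] theorem zero_R : (0 : MulPair mul).R = 0 := rfl

instance : Add (MulPair mul) :=
  ⟨fun m n =>
    ⟨m.L + n.L, m.R + n.R,
      fun x y => by simp [m.L_mul, n.L_mul],
      fun x y => by simp [m.R_mul, n.R_mul],
      fun x y => by simp [m.middle, n.middle]⟩⟩

@[simp] theorem add_L (m n : MulPair mul) : (m + n).L = m.L + n.L := rfl
@[simp] theorem add_R (m n : MulPair mul) : (m + n).R = m.R + n.R := rfl

instance : Neg (MulPair mul) :=
  ⟨fun m =>
    ⟨-m.L, -m.R,
      fun x y => by simp [m.L_mul],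
      fun x y => by simp [m.R_mul],
      fun x y => by simp [m.middle]⟩⟩

@[simp] theorem neg_L (m : MulPair mul) : (-m).L = -m.L := rfl
@[simp] theorem neg_R (m : MulPair mul) : (-m).R = -m.R := rfl

instance : Sub (MulPair mul) :=
  ⟨fun m n =>
    ⟨m.L - n.L, m.R - n.R,
      fun x y => by simp [m.L_mul, n.L_mul, sub_eq_add_neg],
      fun x y => by simp [m.R_mul, n.R_mul, sub_eq_add_neg],
      fun x y => by simp [m.middle, n.middle, sub_eq_add_neg]⟩⟩

@[simp] theorem sub_L (m n : MulPair mul) : (m - n).L = m.L - n.L := rfl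
@[simp] theorem sub_R (m n : MulPair mul) : (m - n).R = m.R - n.R := rfl

instance : SMul ℂ (MulPair mul) :=
  ⟨fun c m =>
    ⟨c • m.L, c • m.R,
      fun x y => by simp [m.L_mul],
      fun x y => by simp [m.R_mul],
      fun x y => by simp [m.middle]⟩⟩

@[simp] theorem smul_L (c : ℂ) (m : MulPair mul) : (c • m).L = c • m.L := rfl
@[simp] theorem smul_R (c : ℂ) (m : MulPair mul) : (c • m).R = c • m.R := rfl

instance : SMul ℕ (MulPair mul) :=
  ⟨fun n m =>
    ⟨n • m.L, n • m.R,
      fun x y => by simp [m.L_mul],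
      fun x y => by simp [m.R_mul],
      fun x y => by simp [m.middle]⟩⟩

@[simp] theorem nsmul_L (n : ℕ) (m : MulPair mul) : (n • m).L = n • m.L := rfl
@[simp] theorem nsmul_R (n : ℕ) (m : MulPair mul) : (n • m).R = n • m.R := rfl

instance : SMul ℤ (MulPair mul) :=
  ⟨fun n m =>
    ⟨n • m.L, n • m.R,
      fun x y => by simp [m.L_mul],
      fun x y => by simp [m.R_mul],
      fun x y => by simp [m.middle]⟩⟩

@[simp] theorem zsmul_L (n : ℤ) (m : MulPair mul) : (n • m).L = n • m.L := rfl
@[simp] theorem zsmul_R (n : ℤ) (m : MulPair mul) : (n • m).R = n • m.R := rfl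

/-- The underlying pair of linear maps. -/
def toProd (m : MulPair mul) : (X →ₗ[ℂ] X) × (X →ₗ[ℂ] X) := (m.L, m.R)

theorem toProd_injective : Function.Injective (toProd (mul := mul)) := by
  intro m n h
  have h1 : m.L = n.L := congrArg Prod.fst h
  have h2 : m.R = n.R := congrArg Prod.snd h
  exact MulPair.ext h1 h2

instance : AddCommGroup (MulPair mul) :=
  toProd_injective.addCommGroup toProd rfl (fun _ _ => rfl) (fun _ => rfl)
    (fun _ _ => rfl) (fun _ _ => rfl) (fun _ _ => rfl)

/-- `toProd` as an additive monoid homomorphism. -/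
def toProdHom : MulPair mul →+ (X →ₗ[ℂ] X) × (X →ₗ[ℂ] X) :=
  { toFun := toProd, map_zero' := rfl, map_add' := fun _ _ => rfl }

instance : Module ℂ (MulPair mul) :=
  Function.Injective.module ℂ (toProdHom (mul := mul)) toProd_injective fun _ _ => rfl

theorem mul_add (m n k : MulPair mul) : m * (n + k) = m * n + m * k := by
  ext x <;> simp

theorem add_mul (m n k : MulPair mul) : (m + n) * k = m * k + n * k := by
  ext x <;> simp

theorem smul_mul (c : ℂ) (m n : MulPair mul) : (c • m) * n = c • (m * n) := by
  ext x <;> simp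

theorem mul_smul (c : ℂ) (m n : MulPair mul) : m * (c • n) = c • (m * n) := by
  ext x <;> simp

theorem mul_assoc (m n k : MulPair mul) : m * n * k = m * (n * k) := by
  ext x <;> simp [LinearMap.comp_assoc]

end MulPair

end MulPair

/-! ## Slice maps -/

section Slices

variable {X Y : Type*} [AddCommGroup X] [Module ℂ X] [AddCommGroup Y] [Module ℂ Y]

/-- Apply a functional to the second tensor leg: `(ι ⊗ φ)`. -/
def sliceR (φ : X →ₗ[ℂ] ℂ) : Y ⊗[ℂ] X →ₗ[ℂ] Y :=
  (TensorProduct.rid ℂ Y).toLinearMap ∘ₗ LinearMap.lTensor Y φ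

/-- Apply a functional to the first tensor leg: `(φ ⊗ ι)`. -/
def sliceL (φ : X →ₗ[ℂ] ℂ) : X ⊗[ℂ] Y →ₗ[ℂ] Y :=
  (TensorProduct.lid ℂ Y).toLinearMap ∘ₗ LinearMap.rTensor Y φ

@[simp] theorem sliceR_tmul (φ : X →ₗ[ℂ] ℂ) (y : Y) (x : X) :
    sliceR φ (y ⊗ₜ[ℂ] x) = φ x • y := by simp [sliceR]

@[simp] theorem sliceL_tmul (φ : X →ₗ[ℂ] ℂ) (x : X) (y : Y) :
    sliceL φ (x ⊗ₜ[ℂ] y) = φ x • y := by simp [sliceL]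

end Slices

/-! ## Regular multiplier Hopf algebras -/

section RegMultHopf

variable (A : Type*) [NonUnitalRing A] [Module ℂ A] [SMulCommClass ℂ A A]
  [IsScalarTower ℂ A A]

/-- The componentwise multiplication of `A ⊗ A`, as a bilinear map. -/
def tmulMul : (A ⊗[ℂ] A) →ₗ[ℂ] (A ⊗[ℂ] A) →ₗ[ℂ] (A ⊗[ℂ] A) :=
  TensorProduct.curry
    ((TensorProduct.map (LinearMap.mul' ℂ A) (LinearMap.mul' ℂ A)) ∘ₗ
      (TensorProduct.tensorTensorTensorComm ℂ A A A A).toLinearMap)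

@[simp] theorem tmulMul_tmul (x y x' y' : A) :
    tmulMul A (x ⊗ₜ[ℂ] y) (x' ⊗ₜ[ℂ] y') = (x * x') ⊗ₜ[ℂ] (y * y') := by
  simp [tmulMul]

variable {A}

/-- A regular multiplier Hopf algebra structure on the non-unital algebra `A`
(Van Daele; see Section 2 of the paper).  The product of `A` is required to be
non-degenerate; `Δ` is the comultiplication with values in the multiplier
algebra `M(A ⊗ A)`; `T1 a b = Δ(a)(1 ⊗ b)`, `T2 a b = (a ⊗ 1)Δ(b)`,
`T3 a b = Δ(a)(b ⊗ 1)` and `T4 a b = (1 ⊗ a)Δ(b)` are the canonical maps with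
values in `A ⊗ A`, and the four lifted maps on `A ⊗ A` are bijective (the last
two bijectivity conditions express regularity).  `counit` and the bijective
antipode `S` satisfy the usual axioms in covered form. -/
structure RegMultHopf : Type _ where
  nondegL : ∀ a : A, (∀ b : A, a * b = 0) → a = 0
  nondegR : ∀ a : A, (∀ b : A, b * a = 0) → a = 0
  Δ : A → MulPair (tmulMul A)
  Δ_add : ∀ a b : A, Δ (a + b) = Δ a + Δ b
  Δ_smul : ∀ (c : ℂ) (a : A), Δ (c • a) = c • Δ a
  Δ_mul : ∀ a b : A, Δ (a * b) = Δ a * Δ b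
  T1 : A →ₗ[ℂ] A →ₗ[ℂ] A ⊗[ℂ] A
  T2 : A →ₗ[ℂ] A →ₗ[ℂ] A ⊗[ℂ] A
  T3 : A →ₗ[ℂ] A →ₗ[ℂ] A ⊗[ℂ] A
  T4 : A →ₗ[ℂ] A →ₗ[ℂ] A ⊗[ℂ] A
  T1_spec : ∀ (a b : A) (u : A ⊗[ℂ] A),
    tmulMul A (T1 a b) u = (Δ a).L (LinearMap.lTensor A (LinearMap.mulLeft ℂ b) u)
  T2_spec : ∀ (a b : A) (u : A ⊗[ℂ] A),
    tmulMul A u (T2 a b) = (Δ b).R (LinearMap.rTensor A (LinearMap.mulRight ℂ a) u)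
  T3_spec : ∀ (a b : A) (u : A ⊗[ℂ] A),
    tmulMul A (T3 a b) u = (Δ a).L (LinearMap.rTensor A (LinearMap.mulLeft ℂ b) u)
  T4_spec : ∀ (a b : A) (u : A ⊗[ℂ] A),
    tmulMul A u (T4 a b) = (Δ b).R (LinearMap.lTensor A (LinearMap.mulRight ℂ a) u)
  T1_bij : Function.Bijective (TensorProduct.lift T1)
  T2_bij : Function.Bijective (TensorProduct.lift T2)
  T3_bij : Function.Bijective (TensorProduct.lift T3)
  T4_bij : Function.Bijective (TensorProduct.lift T4)
  coassoc : ∀ a b c : A,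
    (TensorProduct.assoc ℂ A A A) (LinearMap.rTensor A (T2 a) (T1 b c)) =
      LinearMap.lTensor A (T1.flip c) (T2 a b)
  counit : A →ₗ[ℂ] ℂ
  counit_mul : ∀ a b : A, counit (a * b) = counit a * counit b
  counit_T1 : ∀ a b : A, sliceL counit (T1 a b) = a * b
  counit_T2 : ∀ a b : A, sliceR counit (T2 a b) = a * b
  S : A →ₗ[ℂ] A
  Sinv : A →ₗ[ℂ] A
  S_Sinv : ∀ a : A, S (Sinv a) = a
  Sinv_S : ∀ a : A, Sinv (S a) = a
  S_mul : ∀ a b : A, S (a * b) = S b * S a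
  S_T1 : ∀ a b : A,
    LinearMap.mul' ℂ A (LinearMap.rTensor A S (T1 a b)) = counit a • b
  S_T2 : ∀ a b : A,
    LinearMap.mul' ℂ A (LinearMap.lTensor A S (T2 a b)) = counit b • a

/-- `φ` is a left integral on `(A, Δ)`: a non-zero functional with
`(ι ⊗ φ)Δ(a) = φ(a)1` in `M(A)`; evaluated against elements of `A` this
reads `(ι ⊗ φ)(Δ(a)(b ⊗ 1)) = φ(a)b` and `(ι ⊗ φ)((b ⊗ 1)Δ(a)) = φ(a)b`. -/
def IsLeftIntegral (H : RegMultHopf (A := A)) (φ : A →ₗ[ℂ] ℂ) : Prop :=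
  φ ≠ 0 ∧ (∀ a b : A, sliceR φ (H.T3 a b) = φ a • b) ∧
    ∀ a b : A, sliceR φ (H.T2 b a) = φ a • b

end RegMultHopf

/-! ## Module algebras and smash products -/

section ModAlg

variable {A : Type*} [NonUnitalRing A] [Module ℂ A] [SMulCommClass ℂ A A]
  [IsScalarTower ℂ A A]
variable {R : Type*} [AddCommGroup R] [Module ℂ R]

/-- The bilinear map `(p, q) ↦ (p ▷ x) ⬝ (q ▷ z)` used to express the module
algebra condition `a ▷ (x ⬝ y) = Σ (a₍₁₎ ▷ x) ⬝ (a₍₂₎ ▷ y)` in covered form. -/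
def actPair (mulR : R →ₗ[ℂ] R →ₗ[ℂ] R) (act : A →ₗ[ℂ] R →ₗ[ℂ] R) (x z : R) :
    A →ₗ[ℂ] A →ₗ[ℂ] R :=
  LinearMap.mk₂ ℂ (fun p q => mulR (act p x) (act q z))
    (fun p p' q => by simp)
    (fun c p q => by simp)
    (fun p q q' => by simp)
    (fun c p q => by simp)

/-- `R`, an algebra with multiplication `mulR` (associative, with
non-degenerate product), is a left `A`-module algebra for the unital action
`act`; the compatibility `a(xy) = Σ (a₍₁₎x)(a₍₂₎y)` is expressed in the
covered form `a ▷ (x ⬝ (b ▷ z)) = Σ (a₍₁₎ ▷ x) ⬝ ((a₍₂₎ b) ▷ z)` using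
`T1 a b = Δ(a)(1 ⊗ b)`. -/
structure IsModAlg (H : RegMultHopf (A := A)) (mulR : R →ₗ[ℂ] R →ₗ[ℂ] R)
    (act : A →ₗ[ℂ] R →ₗ[ℂ] R) : Prop where
  mul_assoc' : ∀ x y z : R, mulR (mulR x y) z = mulR x (mulR y z)
  mul_nondegL : ∀ x : R, (∀ y : R, mulR x y = 0) → x = 0
  mul_nondegR : ∀ x : R, (∀ y : R, mulR y x = 0) → x = 0
  act_act : ∀ (a b : A) (x : R), act (a * b) x = act a (act b x)
  unital : Submodule.span ℂ {y : R | ∃ a x, act a x = y} = ⊤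
  compat : ∀ (a b : A) (x z : R),
    act a (mulR x (act b z)) =
      TensorProduct.lift (actPair mulR act x z) (H.T1 a b)

/-- The bilinear map `(p, q) ↦ (x ⬝ (p ▷ x')) ⊗ q` describing the smash
product multiplication in covered form. -/
def smashPair (mulR : R →ₗ[ℂ] R →ₗ[ℂ] R) (act : A →ₗ[ℂ] R →ₗ[ℂ] R) (x x' : R) :
    A →ₗ[ℂ] A →ₗ[ℂ] R ⊗[ℂ] A :=
  LinearMap.mk₂ ℂ (fun p q => mulR x (act p x') ⊗ₜ[ℂ] q)
    (fun p p' q => by simp [add_tmul])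
    (fun c p q => by simp [smul_tmul'])
    (fun p q q' => by simp [tmul_add])
    (fun c p q => by simp [tmul_smul])

/-- The bilinear map `(p, q) ↦ p ▷ (f (q ▷ z))`, used to express in covered
form the extension of an action to the multiplier algebra `M(R)`:
`(a ▷ m)x = Σ a₍₁₎ ▷ (m (S(a₍₂₎) ▷ x))`. -/
def actSandwich (act : A →ₗ[ℂ] R →ₗ[ℂ] R) (f : R →ₗ[ℂ] R) (z : R) :
    A →ₗ[ℂ] A →ₗ[ℂ] R :=
  LinearMap.mk₂ ℂ (fun p q => act p (f (act q z)))
    (fun p p' q => by simp)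
    (fun c p q => by simp)
    (fun p q q' => by simp)
    (fun c p q => by simp)

/-- The bilinear map `(p, q) ↦ (x ⬝ γ(p)) ⊗ q` for a map `γ` into the
multiplier algebra `M(R)`. -/
def multTensorPair {mulR : R →ₗ[ℂ] R →ₗ[ℂ] R} (γ : A →ₗ[ℂ] MulPair mulR) (x : R) :
    A →ₗ[ℂ] A →ₗ[ℂ] R ⊗[ℂ] A :=
  LinearMap.mk₂ ℂ (fun p q => ((γ p).R x) ⊗ₜ[ℂ] q)
    (fun p p' q => by simp [add_tmul])
    (fun c p q => by simp [smul_tmul'])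
    (fun p q q' => by simp [tmul_add])
    (fun c p q => by simp [tmul_smul])

/-- `μ` is the multiplication of the smash product `R # A`:
`(x # a)(x' # a') = Σ x(a₍₁₎ ▷ x') # a₍₂₎a'`, expressed via
`T1 a a' = Δ(a)(1 ⊗ a') = Σ a₍₁₎ ⊗ a₍₂₎a'`. -/
def IsSmashMul (H : RegMultHopf (A := A)) (mulR : R →ₗ[ℂ] R →ₗ[ℂ] R)
    (act : A →ₗ[ℂ] R →ₗ[ℂ] R)
    (μ : (R ⊗[ℂ] A) →ₗ[ℂ] (R ⊗[ℂ] A) →ₗ[ℂ] (R ⊗[ℂ] A)) : Prop :=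
  ∀ (x x' : R) (a a' : A),
    μ (x ⊗ₜ[ℂ] a) (x' ⊗ₜ[ℂ] a') =
      TensorProduct.lift (smashPair mulR act x x') (H.T1 a a')

end ModAlg

/-! ## Dual pairs of regular multiplier Hopf algebras -/

section Pairing

variable {A B : Type*} [NonUnitalRing A] [Module ℂ A] [SMulCommClass ℂ A A]
  [IsScalarTower ℂ A A] [NonUnitalRing B] [Module ℂ B] [SMulCommClass ℂ B B]
  [IsScalarTower ℂ B B]

/-- A (non-degenerate) pairing of regular multiplier Hopf algebras in the
sense of Drabant–Van Daele.  `β` is the bilinear form; `lA a b = a ▷ b =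
Σ ⟨a, b₍₂₎⟩ b₍₁₎`, `lB b a = b ▷ a = Σ ⟨a₍₂₎, b⟩ a₍₁₎`, `rA a b = a ◁ b =
Σ ⟨a₍₁₎, b⟩ a₍₂₎`, `rB b a = b ◁ a = Σ ⟨a, b₍₁₎⟩ b₍₂₎` are the Sweedler leg
actions, tied to the comultiplications via the `..._leg` axioms and dual to
the multiplications via the `dual...` axioms; all four actions are unital
module actions. -/
structure MHAPairing (HA : RegMultHopf (A := A)) (HB : RegMultHopf (A := B)) :
    Type _ where
  β : A →ₗ[ℂ] B →ₗ[ℂ] ℂ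
  nondegA : ∀ a : A, (∀ b : B, β a b = 0) → a = 0
  nondegB : ∀ b : B, (∀ a : A, β a b = 0) → b = 0
  lA : A →ₗ[ℂ] B →ₗ[ℂ] B
  lB : B →ₗ[ℂ] A →ₗ[ℂ] A
  rA : A →ₗ[ℂ] B →ₗ[ℂ] A
  rB : B →ₗ[ℂ] A →ₗ[ℂ] B
  lA_leg : ∀ (a : A) (b c : B), sliceR (β a) (HB.T3 b c) = lA a b * c
  rB_leg : ∀ (a : A) (b c : B), sliceL (β a) (HB.T4 c b) = c * rB b a
  lB_leg : ∀ (b : B) (a c : A), sliceR (β.flip b) (HA.T3 a c) = lB b a * c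
  rA_leg : ∀ (b : B) (a c : A), sliceL (β.flip b) (HA.T4 c a) = c * rA a b
  dual1 : ∀ (a : A) (b b' : B), β a (b * b') = β (rA a b) b'
  dual2 : ∀ (a : A) (b b' : B), β a (b' * b) = β (lB b a) b'
  dual3 : ∀ (a a' : A) (b : B), β (a * a') b = β a' (rB b a)
  dual4 : ∀ (a a' : A) (b : B), β (a' * a) b = β a' (lA a b)
  lA_act : ∀ (a a' : A) (b : B), lA (a * a') b = lA a (lA a' b)
  lB_act : ∀ (b b' : B) (a : A), lB (b * b') a = lB b (lB b' a)
  rA_act : ∀ (a : A) (b b' : B), rA a (b * b') = rA (rA a b) b'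
  rB_act : ∀ (b : B) (a a' : A), rB b (a * a') = rB (rB b a) a'
  lA_unital : Submodule.span ℂ {y : B | ∃ a b, lA a b = y} = ⊤
  lB_unital : Submodule.span ℂ {y : A | ∃ b a, lB b a = y} = ⊤
  rA_unital : Submodule.span ℂ {y : A | ∃ a b, rA a b = y} = ⊤
  rB_unital : Submodule.span ℂ {y : B | ∃ b a, rB b a = y} = ⊤

end Pairing

/-! ## The dual action -/

section DualAction

variable {A B : Type*} [NonUnitalRing A] [Module ℂ A] [SMulCommClass ℂ A A]
  [IsScalarTower ℂ A A] [NonUnitalRing B] [Module ℂ B] [SMulCommClass ℂ B B]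
  [IsScalarTower ℂ B B]
variable {R : Type*} [AddCommGroup R] [Module ℂ R]
variable {HA : RegMultHopf (A := A)} {HB : RegMultHopf (A := B)}

/-- The dual action of `B` on the smash product `R # A`:
`b · (x # a) = x # (b ▷ a) = Σ ⟨a₍₂₎, b⟩ x # a₍₁₎`. -/
def dualAct (P : MHAPairing HA HB) : B →ₗ[ℂ] (R ⊗[ℂ] A) →ₗ[ℂ] R ⊗[ℂ] A :=
  (LinearMap.lTensorHom R) ∘ₗ P.lB

@[simp] theorem dualAct_tmul (P : MHAPairing HA HB) (b : B) (x : R) (a : A) :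
    dualAct P b (x ⊗ₜ[ℂ] a) = x ⊗ₜ[ℂ] P.lB b a := rfl

end DualAction

end
set_option linter.unusedSectionVars false
set_option linter.unusedVariables false
set_option maxHeartbeats 1000000

noncomputable section AuxAll

/-! ## Auxiliary lemmas -/

section AuxSlices

variable {X Y Z : Type*} [AddCommGroup X] [Module ℂ X] [AddCommGroup Y] [Module ℂ Y]
  [AddCommGroup Z] [Module ℂ Z]

theorem sliceL_lTensor (f : X →ₗ[ℂ] ℂ) (g : Y →ₗ[ℂ] Z) (w : X ⊗[ℂ] Y) :
    sliceL f (LinearMap.lTensor X g w) = g (sliceL f w) := by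
  induction w using TensorProduct.induction_on with
  | zero => simp
  | tmul x y => simp
  | add u v hu hv => simp [hu, hv]

theorem sliceR_rTensor (f : X →ₗ[ℂ] ℂ) (g : Y →ₗ[ℂ] Z) (w : Y ⊗[ℂ] X) :
    sliceR f (LinearMap.rTensor X g w) = g (sliceR f w) := by
  induction w using TensorProduct.induction_on with
  | zero => simp
  | tmul y x => simp
  | add u v hu hv => simp [hu, hv]

theorem eq_zero_of_forall_sliceL (w : X ⊗[ℂ] Y)
    (h : ∀ f : X →ₗ[ℂ] ℂ, sliceL f w = 0) : w = 0 := by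
  let bX := Module.Basis.ofVectorSpace ℂ X
  let bY := Module.Basis.ofVectorSpace ℂ Y
  let B := bX.tensorProduct bY
  have hrepr : ∀ (w : X ⊗[ℂ] Y) (i j), B.repr w (i, j) =
      bY.repr (sliceL (bX.coord i) w) j := by
    intro w i j
    induction w using TensorProduct.induction_on with
    | zero => simp
    | tmul x y =>
      simp [B, Module.Basis.tensorProduct_repr_tmul_apply, Module.Basis.coord_apply,
        smul_eq_mul, mul_comm]
    | add u v hu hv => simp [hu, hv]
  have hz : B.repr w = 0 := by
    ext ⟨i, j⟩
    rw [hrepr w i j, h (bX.coord i)]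
    simp
  simpa using congrArg B.repr.symm hz

theorem eq_zero_of_forall_sliceR (w : Y ⊗[ℂ] X)
    (h : ∀ f : X →ₗ[ℂ] ℂ, sliceR f w = 0) : w = 0 := by
  let bX := Module.Basis.ofVectorSpace ℂ X
  let bY := Module.Basis.ofVectorSpace ℂ Y
  let B := bY.tensorProduct bX
  have hrepr : ∀ (w : Y ⊗[ℂ] X) (j i), B.repr w (j, i) =
      bY.repr (sliceR (bX.coord i) w) j := by
    intro w j i
    induction w using TensorProduct.induction_on with
    | zero => simp
    | tmul y x =>
      simp [B, Module.Basis.tensorProduct_repr_tmul_apply, Module.Basis.coord_apply,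
        smul_eq_mul, mul_comm]
    | add u v hu hv => simp [hu, hv]
  have hz : B.repr w = 0 := by
    ext ⟨j, i⟩
    rw [hrepr w j i, h (bX.coord i)]
    simp
  simpa using congrArg B.repr.symm hz

end AuxSlices

section AuxA

variable {A : Type*} [NonUnitalRing A] [Module ℂ A] [SMulCommClass ℂ A A]
  [IsScalarTower ℂ A A]
variable {X : Type*} [AddCommGroup X] [Module ℂ X]

/-- If multiplying the second (A-) leg on the right by every element kills `w`, and the
product of `A` is non-degenerate on the left, then `w = 0`. -/
theorem zero_of_lTensor_mulRight (hnd : ∀ a : A, (∀ b : A, a * b = 0) → a = 0)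
    (w : X ⊗[ℂ] A) (h : ∀ d : A, LinearMap.lTensor X (LinearMap.mulRight ℂ d) w = 0) :
    w = 0 := by
  refine eq_zero_of_forall_sliceL w fun f => ?_
  refine hnd _ fun d => ?_
  have := congrArg (sliceL f) (h d)
  rwa [sliceL_lTensor, map_zero, LinearMap.mulRight_apply] at this

theorem zero_of_lTensor_mulLeft (hnd : ∀ a : A, (∀ b : A, b * a = 0) → a = 0)
    (w : X ⊗[ℂ] A) (h : ∀ d : A, LinearMap.lTensor X (LinearMap.mulLeft ℂ d) w = 0) :
    w = 0 := by
  refine eq_zero_of_forall_sliceL w fun f => ?_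
  refine hnd _ fun d => ?_
  have := congrArg (sliceL f) (h d)
  rwa [sliceL_lTensor, map_zero, LinearMap.mulLeft_apply] at this

theorem zero_of_rTensor_mulLeft (hnd : ∀ a : A, (∀ b : A, b * a = 0) → a = 0)
    (w : A ⊗[ℂ] X) (h : ∀ c : A, LinearMap.rTensor X (LinearMap.mulLeft ℂ c) w = 0) :
    w = 0 := by
  refine eq_zero_of_forall_sliceR w fun f => ?_
  refine hnd _ fun c => ?_
  have := congrArg (sliceR f) (h c)
  rwa [sliceR_rTensor, map_zero, LinearMap.mulLeft_apply] at this

theorem zero_of_rTensor_mulRight (hnd : ∀ a : A, (∀ b : A, a * b = 0) → a = 0)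
    (w : A ⊗[ℂ] X) (h : ∀ c : A, LinearMap.rTensor X (LinearMap.mulRight ℂ c) w = 0) :
    w = 0 := by
  refine eq_zero_of_forall_sliceR w fun f => ?_
  refine hnd _ fun c => ?_
  have := congrArg (sliceR f) (h c)
  rwa [sliceR_rTensor, map_zero, LinearMap.mulRight_apply] at this

end AuxA

section AuxTm

variable {A : Type*} [NonUnitalRing A] [Module ℂ A] [SMulCommClass ℂ A A]
  [IsScalarTower ℂ A A]

theorem tm_lTensor_mulRight_right (u v : A ⊗[ℂ] A) (d : A) :
    tmulMul A u (LinearMap.lTensor A (LinearMap.mulRight ℂ d) v) =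
      LinearMap.lTensor A (LinearMap.mulRight ℂ d) (tmulMul A u v) := by
  induction u using TensorProduct.induction_on with
  | zero => simp
  | tmul x y =>
    induction v using TensorProduct.induction_on with
    | zero => simp
    | tmul r s => simp [mul_assoc]
    | add v₁ v₂ h₁ h₂ => simp only [map_add, LinearMap.add_apply, h₁, h₂]
  | add u₁ u₂ h₁ h₂ => simp only [map_add, LinearMap.add_apply, h₁, h₂]

theorem tm_rTensor_mulLeft_right (u v : A ⊗[ℂ] A) (c : A) :
    tmulMul A u (LinearMap.rTensor A (LinearMap.mulLeft ℂ c) v) =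
      tmulMul A (LinearMap.rTensor A (LinearMap.mulRight ℂ c) u) v := by
  induction u using TensorProduct.induction_on with
  | zero => simp
  | tmul x y =>
    induction v using TensorProduct.induction_on with
    | zero => simp
    | tmul r s => simp [mul_assoc]
    | add v₁ v₂ h₁ h₂ => simp only [map_add, LinearMap.add_apply, h₁, h₂]
  | add u₁ u₂ h₁ h₂ => simp only [map_add, LinearMap.add_apply, h₁, h₂]

theorem tm_rTensor_mulLeft_left (u v : A ⊗[ℂ] A) (c : A) :
    tmulMul A (LinearMap.rTensor A (LinearMap.mulLeft ℂ c) u) v =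
      LinearMap.rTensor A (LinearMap.mulLeft ℂ c) (tmulMul A u v) := by
  induction u using TensorProduct.induction_on with
  | zero => simp
  | tmul x y =>
    induction v using TensorProduct.induction_on with
    | zero => simp
    | tmul r s => simp [mul_assoc]
    | add v₁ v₂ h₁ h₂ => simp only [map_add, LinearMap.add_apply, h₁, h₂]
  | add u₁ u₂ h₁ h₂ => simp only [map_add, LinearMap.add_apply, h₁, h₂]

theorem tm_lTensor_mulRight_left (u v : A ⊗[ℂ] A) (d : A) :
    tmulMul A (LinearMap.lTensor A (LinearMap.mulRight ℂ d) u) v =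
      tmulMul A u (LinearMap.lTensor A (LinearMap.mulLeft ℂ d) v) := by
  induction u using TensorProduct.induction_on with
  | zero => simp
  | tmul x y =>
    induction v using TensorProduct.induction_on with
    | zero => simp
    | tmul r s => simp [mul_assoc]
    | add v₁ v₂ h₁ h₂ => simp only [map_add, LinearMap.add_apply, h₁, h₂]
  | add u₁ u₂ h₁ h₂ => simp only [map_add, LinearMap.add_apply, h₁, h₂]

theorem tm_lTensor_mulLeft_right (u v : A ⊗[ℂ] A) (s : A) :
    tmulMul A u (LinearMap.lTensor A (LinearMap.mulLeft ℂ s) v) =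
      tmulMul A (LinearMap.lTensor A (LinearMap.mulRight ℂ s) u) v := by
  rw [tm_lTensor_mulRight_left]

theorem tm_rTensor_mulRight_right (u v : A ⊗[ℂ] A) (b : A) :
    tmulMul A u (LinearMap.rTensor A (LinearMap.mulRight ℂ b) v) =
      LinearMap.rTensor A (LinearMap.mulRight ℂ b) (tmulMul A u v) := by
  induction u using TensorProduct.induction_on with
  | zero => simp
  | tmul x y =>
    induction v using TensorProduct.induction_on with
    | zero => simp
    | tmul r s => simp [mul_assoc]
    | add v₁ v₂ h₁ h₂ => simp only [map_add, LinearMap.add_apply, h₁, h₂]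
  | add u₁ u₂ h₁ h₂ => simp only [map_add, LinearMap.add_apply, h₁, h₂]

theorem tm_tmul_left (z w : A) (v : A ⊗[ℂ] A) :
    tmulMul A (z ⊗ₜ[ℂ] w) v =
      LinearMap.rTensor A (LinearMap.mulLeft ℂ z)
        (LinearMap.lTensor A (LinearMap.mulLeft ℂ w) v) := by
  induction v using TensorProduct.induction_on with
  | zero => simp
  | tmul r s => simp
  | add v₁ v₂ h₁ h₂ => simp only [map_add, LinearMap.add_apply, h₁, h₂]

theorem tm_tmul_right (v : A ⊗[ℂ] A) (z w : A) :
    tmulMul A v (z ⊗ₜ[ℂ] w) =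
      LinearMap.rTensor A (LinearMap.mulRight ℂ z)
        (LinearMap.lTensor A (LinearMap.mulRight ℂ w) v) := by
  induction v using TensorProduct.induction_on with
  | zero => simp
  | tmul r s => simp
  | add v₁ v₂ h₁ h₂ => simp only [map_add, LinearMap.add_apply, h₁, h₂]

theorem tm_assoc (u v w : A ⊗[ℂ] A) :
    tmulMul A (tmulMul A u v) w = tmulMul A u (tmulMul A v w) := by
  induction u using TensorProduct.induction_on with
  | zero => simp
  | tmul x y =>
    induction v using TensorProduct.induction_on with
    | zero => simp
    | tmul r s =>
      induction w using TensorProduct.induction_on with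
      | zero => simp
      | tmul p q => simp [mul_assoc]
      | add w₁ w₂ h₁ h₂ => simp only [map_add, LinearMap.add_apply, h₁, h₂]
    | add v₁ v₂ h₁ h₂ => simp only [map_add, LinearMap.add_apply, h₁, h₂]
  | add u₁ u₂ h₁ h₂ => simp only [map_add, LinearMap.add_apply, h₁, h₂]

/-- Right non-degeneracy of the product of `A ⊗ A`. -/
theorem tm_nondeg_left (hL : ∀ a : A, (∀ b : A, a * b = 0) → a = 0)
    (hR : ∀ a : A, (∀ b : A, b * a = 0) → a = 0)
    (v : A ⊗[ℂ] A) (h : ∀ u : A ⊗[ℂ] A, tmulMul A v u = 0) : v = 0 := by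
  refine zero_of_lTensor_mulRight hL v fun d => ?_
  refine zero_of_rTensor_mulRight (X := A) hL _ fun c => ?_
  rw [← tm_tmul_right]
  exact h _

theorem tm_nondeg_right (hL : ∀ a : A, (∀ b : A, a * b = 0) → a = 0)
    (hR : ∀ a : A, (∀ b : A, b * a = 0) → a = 0)
    (v : A ⊗[ℂ] A) (h : ∀ u : A ⊗[ℂ] A, tmulMul A u v = 0) : v = 0 := by
  refine zero_of_lTensor_mulLeft hR v fun d => ?_
  refine zero_of_rTensor_mulLeft (X := A) hR _ fun c => ?_
  rw [← tm_tmul_left]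
  exact h _

theorem tm_nondeg_mid (hL : ∀ a : A, (∀ b : A, a * b = 0) → a = 0)
    (hR : ∀ a : A, (∀ b : A, b * a = 0) → a = 0)
    (v : A ⊗[ℂ] A) (h : ∀ u w : A ⊗[ℂ] A, tmulMul A u (tmulMul A v w) = 0) : v = 0 := by
  refine tm_nondeg_left hL hR v fun w => ?_
  exact tm_nondeg_right hL hR _ fun u => h u w

end AuxTm

section AuxComm

variable {M M' N N' : Type*} [AddCommGroup M] [Module ℂ M] [AddCommGroup M'] [Module ℂ M']
  [AddCommGroup N] [Module ℂ N] [AddCommGroup N'] [Module ℂ N']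

theorem rT_lT_comm (f : M →ₗ[ℂ] M') (g : N →ₗ[ℂ] N') (w : M ⊗[ℂ] N) :
    LinearMap.rTensor N' f (LinearMap.lTensor M g w) =
      LinearMap.lTensor M' g (LinearMap.rTensor N f w) := by
  induction w using TensorProduct.induction_on with
  | zero => simp
  | tmul x y => simp
  | add u v hu hv => simp [hu, hv]

theorem rTensor_add_map (f g : M →ₗ[ℂ] M') (w : M ⊗[ℂ] N) :
    LinearMap.rTensor N (f + g) w = LinearMap.rTensor N f w + LinearMap.rTensor N g w := by
  induction w using TensorProduct.induction_on with
  | zero => simp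
  | tmul x y => simp [add_tmul]
  | add u v hu hv => simp only [map_add, hu, hv]; abel

theorem rTensor_smul_map (r : ℂ) (f : M →ₗ[ℂ] M') (w : M ⊗[ℂ] N) :
    LinearMap.rTensor N (r • f) w = r • LinearMap.rTensor N f w := by
  induction w using TensorProduct.induction_on with
  | zero => simp
  | tmul x y => simp [smul_tmul']
  | add u v hu hv => simp only [map_add, hu, hv, smul_add]

end AuxComm

section AuxHopf

variable {A : Type*} [NonUnitalRing A] [Module ℂ A] [SMulCommClass ℂ A A]
  [IsScalarTower ℂ A A]

theorem tm_eq_of_forall_right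
    (hL : ∀ a : A, (∀ b : A, a * b = 0) → a = 0)
    (hR : ∀ a : A, (∀ b : A, b * a = 0) → a = 0)
    {v w : A ⊗[ℂ] A} (h : ∀ u, tmulMul A u v = tmulMul A u w) : v = w := by
  have := tm_nondeg_right hL hR (v - w) (fun u => by rw [map_sub, h u, sub_self])
  exact sub_eq_zero.mp this

theorem tm_eq_of_forall_left
    (hL : ∀ a : A, (∀ b : A, a * b = 0) → a = 0)
    (hR : ∀ a : A, (∀ b : A, b * a = 0) → a = 0)
    {v w : A ⊗[ℂ] A} (h : ∀ u, tmulMul A v u = tmulMul A w u) : v = w := by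
  have := tm_nondeg_left hL hR (v - w) (fun u => by
    rw [map_sub, LinearMap.sub_apply, h u, sub_self])
  exact sub_eq_zero.mp this

theorem tm_eq_of_forall_mid
    (hL : ∀ a : A, (∀ b : A, a * b = 0) → a = 0)
    (hR : ∀ a : A, (∀ b : A, b * a = 0) → a = 0)
    {v w : A ⊗[ℂ] A} (h : ∀ u u', tmulMul A u (tmulMul A v u') = tmulMul A u (tmulMul A w u')) :
    v = w := by
  refine tm_eq_of_forall_left hL hR fun u' => ?_
  exact tm_eq_of_forall_right hL hR fun u => h u u'

theorem eq_of_forall_lTensor_mulRight {X : Type*} [AddCommGroup X] [Module ℂ X]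
    (hL : ∀ a : A, (∀ b : A, a * b = 0) → a = 0)
    {v w : X ⊗[ℂ] A}
    (h : ∀ d, LinearMap.lTensor X (LinearMap.mulRight ℂ d) v =
      LinearMap.lTensor X (LinearMap.mulRight ℂ d) w) : v = w := by
  have := zero_of_lTensor_mulRight hL (v - w) (fun d => by rw [map_sub, h d, sub_self])
  exact sub_eq_zero.mp this

theorem eq_of_forall_rTensor_mulLeft {X : Type*} [AddCommGroup X] [Module ℂ X]
    (hR : ∀ a : A, (∀ b : A, b * a = 0) → a = 0)
    {v w : A ⊗[ℂ] X}
    (h : ∀ c, LinearMap.rTensor X (LinearMap.mulLeft ℂ c) v =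
      LinearMap.rTensor X (LinearMap.mulLeft ℂ c) w) : v = w := by
  have := zero_of_rTensor_mulLeft hR (v - w) (fun c => by rw [map_sub, h c, sub_self])
  exact sub_eq_zero.mp this

theorem A_eq_of_forall_mul_right
    (hL : ∀ a : A, (∀ b : A, a * b = 0) → a = 0)
    {x y : A} (h : ∀ e, x * e = y * e) : x = y := by
  have := hL (x - y) (fun e => by rw [sub_mul, h e, sub_self])
  exact sub_eq_zero.mp this

/-- Multiply the first leg of `A ⊗ (A ⊗ A)` into the second: `p ⊗ r ⊗ s ↦ pr ⊗ s`. -/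
def mulFirst (A : Type*) [NonUnitalRing A] [Module ℂ A] [SMulCommClass ℂ A A]
    [IsScalarTower ℂ A A] : A ⊗[ℂ] (A ⊗[ℂ] A) →ₗ[ℂ] A ⊗[ℂ] A :=
  LinearMap.rTensor A (LinearMap.mul' ℂ A) ∘ₗ (TensorProduct.assoc ℂ A A A).symm.toLinearMap

@[simp] theorem mulFirst_tmul (p r s : A) :
    mulFirst A (p ⊗ₜ[ℂ] (r ⊗ₜ[ℂ] s)) = (p * r) ⊗ₜ[ℂ] s := by
  simp [mulFirst]

theorem mulFirst_tmul' (p : A) (w : A ⊗[ℂ] A) :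
    mulFirst A (p ⊗ₜ[ℂ] w) = LinearMap.rTensor A (LinearMap.mulLeft ℂ p) w := by
  induction w using TensorProduct.induction_on with
  | zero => simp [mulFirst]
  | tmul r s => simp
  | add u v hu hv => rw [tmul_add, map_add, hu, hv, map_add]

theorem mul'_lTensor_mulRight (e : A) (V : A ⊗[ℂ] A) :
    LinearMap.mul' ℂ A (LinearMap.lTensor A (LinearMap.mulRight ℂ e) V) =
      LinearMap.mul' ℂ A V * e := by
  induction V using TensorProduct.induction_on with
  | zero => simp
  | tmul p q => simp [mul_assoc]
  | add u v hu hv => simp only [map_add, hu, hv, add_mul]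

theorem mul'_rTensor_mulLeft (z : A) (V : A ⊗[ℂ] A) :
    LinearMap.mul' ℂ A (LinearMap.rTensor A (LinearMap.mulLeft ℂ z) V) =
      z * LinearMap.mul' ℂ A V := by
  induction V using TensorProduct.induction_on with
  | zero => simp
  | tmul p q => simp [mul_assoc]
  | add u v hu hv => simp only [map_add, hu, hv, mul_add]

variable (H : RegMultHopf (A := A))

theorem rhI3 (c a d : A) :
    LinearMap.lTensor A (LinearMap.mulRight ℂ d) (H.T2 c a) =
      LinearMap.rTensor A (LinearMap.mulLeft ℂ c) (H.T1 a d) := by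
  refine tm_eq_of_forall_right H.nondegL H.nondegR fun u => ?_
  rw [tm_lTensor_mulRight_right, H.T2_spec, tm_rTensor_mulLeft_right]
  refine (tm_eq_of_forall_left H.nondegL H.nondegR fun w => ?_).symm
  rw [tm_assoc, H.T1_spec, tm_lTensor_mulRight_left,
    (H.Δ a).middle (LinearMap.rTensor A (LinearMap.mulRight ℂ c) u)]

theorem rhI4 (q c d : A) :
    LinearMap.lTensor A (LinearMap.mulRight ℂ d) (H.T3 q c) =
      LinearMap.rTensor A (LinearMap.mulRight ℂ c) (H.T1 q d) := by
  refine tm_eq_of_forall_left H.nondegL H.nondegR fun w => ?_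
  rw [tm_lTensor_mulRight_left, H.T3_spec, ← tm_rTensor_mulLeft_right, H.T1_spec,
    rT_lT_comm]

theorem rhI5 (c' r b : A) :
    LinearMap.rTensor A (LinearMap.mulLeft ℂ c') (H.T3 r b) =
      LinearMap.rTensor A (LinearMap.mulRight ℂ b) (H.T2 c' r) := by
  refine tm_eq_of_forall_mid H.nondegL H.nondegR fun u u' => ?_
  rw [tm_rTensor_mulLeft_left, H.T3_spec, tm_rTensor_mulLeft_right,
    (H.Δ r).middle (LinearMap.rTensor A (LinearMap.mulRight ℂ c') u)]
  rw [← tm_assoc, tm_rTensor_mulRight_right, H.T2_spec, ← tm_rTensor_mulLeft_right]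

theorem rhI8 (s c' a' : A) :
    LinearMap.lTensor A (LinearMap.mulLeft ℂ s) (H.T2 c' a') =
      LinearMap.rTensor A (LinearMap.mulLeft ℂ c') (H.T4 s a') := by
  refine tm_eq_of_forall_right H.nondegL H.nondegR fun u => ?_
  rw [tm_lTensor_mulLeft_right, H.T2_spec, tm_rTensor_mulLeft_right, H.T4_spec,
    rT_lT_comm]

theorem rhI10 (s a' d : A) :
    LinearMap.lTensor A (LinearMap.mulRight ℂ d) (H.T4 s a') =
      LinearMap.lTensor A (LinearMap.mulLeft ℂ s) (H.T1 a' d) := by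
  refine tm_eq_of_forall_right H.nondegL H.nondegR fun u => ?_
  rw [tm_lTensor_mulRight_right, H.T4_spec, tm_lTensor_mulLeft_right]
  refine (tm_eq_of_forall_left H.nondegL H.nondegR fun w => ?_).symm
  rw [tm_assoc, H.T1_spec, (H.Δ a').middle, tm_lTensor_mulRight_left]

theorem rhI11 (h k d : A) :
    H.T1 (h * k) d = (H.Δ h).L (H.T1 k d) := by
  refine tm_eq_of_forall_left H.nondegL H.nondegR fun w => ?_
  rw [H.T1_spec, H.Δ_mul, MulPair.mul_L, LinearMap.comp_apply, ← H.T1_spec,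
    (H.Δ h).L_mul (H.T1 k d) w]

theorem S_comp_mulRight_sinv (p : A) :
    H.S ∘ₗ LinearMap.mulRight ℂ (H.Sinv p) = LinearMap.mulLeft ℂ p ∘ₗ H.S := by
  ext x
  simp [H.S_mul, H.S_Sinv]

theorem rhST3 (r b : A) :
    LinearMap.mul' ℂ A (LinearMap.rTensor A H.S (H.T3 r b)) = H.counit r • H.S b := by
  refine A_eq_of_forall_mul_right H.nondegL fun e => ?_
  rw [← mul'_lTensor_mulRight, ← rT_lT_comm, rhI4]
  rw [show LinearMap.rTensor A H.S (LinearMap.rTensor A (LinearMap.mulRight ℂ b) (H.T1 r e)) =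
      LinearMap.rTensor A (H.S ∘ₗ LinearMap.mulRight ℂ b) (H.T1 r e) by
    rw [LinearMap.rTensor_comp, LinearMap.comp_apply]]
  rw [show H.S ∘ₗ LinearMap.mulRight ℂ b = LinearMap.mulLeft ℂ (H.S b) ∘ₗ H.S from
    LinearMap.ext fun x => by simp [H.S_mul]]
  rw [LinearMap.rTensor_comp, LinearMap.comp_apply, mul'_rTensor_mulLeft, H.S_T1]
  rw [smul_mul_assoc, mul_smul_comm]

end AuxHopf

section AuxHopf2

variable {A : Type*} [NonUnitalRing A] [Module ℂ A] [SMulCommClass ℂ A A]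
  [IsScalarTower ℂ A A]

theorem assoc_rTensor_rTensor (g : A →ₗ[ℂ] A) (w : (A ⊗[ℂ] A) ⊗[ℂ] A) :
    (TensorProduct.assoc ℂ A A A) (LinearMap.rTensor A (LinearMap.rTensor A g) w) =
      LinearMap.rTensor (A ⊗[ℂ] A) g ((TensorProduct.assoc ℂ A A A) w) := by
  induction w using TensorProduct.induction_on with
  | zero => simp
  | tmul u s =>
    induction u using TensorProduct.induction_on with
    | zero => simp
    | tmul p q => simp
    | add u₁ u₂ h₁ h₂ =>
      simp only [add_tmul, map_add, h₁, h₂]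
  | add w₁ w₂ h₁ h₂ => simp only [map_add, h₁, h₂]

variable (H : RegMultHopf (A := A))

theorem rhC3 (a b d : A) :
    (TensorProduct.assoc ℂ A A A) (LinearMap.rTensor A (H.T3.flip b) (H.T1 a d)) =
      LinearMap.lTensor A (H.T1.flip d) (H.T3 a b) := by
  refine eq_of_forall_rTensor_mulLeft H.nondegR fun c' => ?_
  rw [← assoc_rTensor_rTensor, ← LinearMap.comp_apply, ← LinearMap.rTensor_comp]
  have hcomp : LinearMap.rTensor A (LinearMap.mulLeft ℂ c') ∘ₗ H.T3.flip b =
      LinearMap.rTensor A (LinearMap.mulRight ℂ b) ∘ₗ H.T2 c' :=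
    LinearMap.ext fun r => by simp [rhI5]
  rw [hcomp, LinearMap.rTensor_comp, LinearMap.comp_apply, assoc_rTensor_rTensor,
    H.coassoc c' a d, rT_lT_comm, ← rhI5, ← rT_lT_comm]

/-- `x ⊗ u ↦ (S x ⊗ 1) u` on `A ⊗ (A ⊗ A)`. -/
def Nmap : A ⊗[ℂ] (A ⊗[ℂ] A) →ₗ[ℂ] A ⊗[ℂ] A :=
  mulFirst A ∘ₗ LinearMap.rTensor (A ⊗[ℂ] A) H.S

/-- `v ⊗ q ↦ (S v ⊗ 1)(Δ q)(1 ⊗ d)` on `A ⊗ A`. -/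
def NdMap (d : A) : A ⊗[ℂ] A →ₗ[ℂ] A ⊗[ℂ] A :=
  mulFirst A ∘ₗ TensorProduct.map H.S (H.T1.flip d)

theorem NdMap_tmul (d v q : A) :
    NdMap H d (v ⊗ₜ[ℂ] q) =
      LinearMap.rTensor A (LinearMap.mulLeft ℂ (H.S v)) (H.T1 q d) := by
  simp [NdMap, mulFirst_tmul']

theorem Nmap_tmul (x : A) (u : A ⊗[ℂ] A) :
    Nmap H (x ⊗ₜ[ℂ] u) = LinearMap.rTensor A (LinearMap.mulLeft ℂ (H.S x)) u := by
  simp [Nmap, mulFirst_tmul']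

theorem Nmap_assoc (t' : A ⊗[ℂ] A) (s : A) :
    Nmap H ((TensorProduct.assoc ℂ A A A) (t' ⊗ₜ[ℂ] s)) =
      (LinearMap.mul' ℂ A (LinearMap.rTensor A H.S t')) ⊗ₜ[ℂ] s := by
  induction t' using TensorProduct.induction_on with
  | zero => simp
  | tmul u v => simp [Nmap_tmul]
  | add u₁ u₂ h₁ h₂ => simp only [add_tmul, map_add, h₁, h₂]

theorem rhGid (h ch y : A) :
    NdMap H y (H.T3 h ch) = (H.S ch) ⊗ₜ[ℂ] (h * y) := by
  have e1 : NdMap H y = Nmap H ∘ₗ LinearMap.lTensor A (H.T1.flip y) :=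
    TensorProduct.ext' fun α β => by
      simp [NdMap, Nmap, mulFirst_tmul']
  rw [e1, LinearMap.comp_apply, ← rhC3 H h ch y]
  have e2 : ∀ t : A ⊗[ℂ] A,
      Nmap H ((TensorProduct.assoc ℂ A A A) (LinearMap.rTensor A (H.T3.flip ch) t)) =
        (H.S ch) ⊗ₜ[ℂ] (sliceL H.counit t) := by
    intro t
    induction t using TensorProduct.induction_on with
    | zero => simp
    | tmul r s =>
      rw [LinearMap.rTensor_tmul, LinearMap.flip_apply, Nmap_assoc, rhST3]
      simp [smul_tmul']
    | add t₁ t₂ h₁ h₂ => simp only [map_add, h₁, h₂, tmul_add]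
  rw [e2 (H.T1 h y), H.counit_T1]

/-- `x ⊗ u ↦ (x ⊗ 1)(ι ⊗ S)(u)` on `A ⊗ (A ⊗ A)`. -/
def N2map : A ⊗[ℂ] (A ⊗[ℂ] A) →ₗ[ℂ] A ⊗[ℂ] A :=
  mulFirst A ∘ₗ LinearMap.lTensor A (LinearMap.rTensor A H.S)

theorem N2map_assoc (t' : A ⊗[ℂ] A) (s : A) :
    N2map H ((TensorProduct.assoc ℂ A A A) (t' ⊗ₜ[ℂ] s)) =
      (LinearMap.mul' ℂ A (LinearMap.lTensor A H.S t')) ⊗ₜ[ℂ] s := by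
  induction t' using TensorProduct.induction_on with
  | zero => simp [N2map]
  | tmul u v => simp [N2map]
  | add u₁ u₂ h₁ h₂ => simp only [add_tmul, map_add, h₁, h₂]

/-- The inverse of `T2` as a map of `A ⊗ A`:  `c ⊗ a ↦ (1 ⊗ S)(Δ(a)(S⁻¹(c) ⊗ 1))`. -/
def Kmap : A ⊗[ℂ] A →ₗ[ℂ] A ⊗[ℂ] A :=
  LinearMap.rTensor A H.S ∘ₗ TensorProduct.lift H.T3.flip ∘ₗ LinearMap.rTensor A H.Sinv

theorem Kmap_tmul (c a : A) :
    Kmap H (c ⊗ₜ[ℂ] a) = LinearMap.rTensor A H.S (H.T3 a (H.Sinv c)) := by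
  simp [Kmap]

/-- `ψ ∘ φ = id` at the level of `A ⊗ A`:  `K(T2 c a) = c ⊗ a`. -/
theorem Kmap_T2 (c a : A) : Kmap H (H.T2 c a) = c ⊗ₜ[ℂ] a := by
  refine eq_of_forall_lTensor_mulRight H.nondegL fun d => ?_
  have e1 : LinearMap.lTensor A (LinearMap.mulRight ℂ d) ∘ₗ Kmap H =
      N2map H ∘ₗ LinearMap.lTensor A (H.T1.flip d) :=
    TensorProduct.ext' fun p q => by
      rw [LinearMap.comp_apply, Kmap_tmul, ← rT_lT_comm, rhI4]
      rw [show LinearMap.rTensor A H.S (LinearMap.rTensor A (LinearMap.mulRight ℂ (H.Sinv p)) (H.T1 q d)) =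
          LinearMap.rTensor A (H.S ∘ₗ LinearMap.mulRight ℂ (H.Sinv p)) (H.T1 q d) by
        rw [LinearMap.rTensor_comp, LinearMap.comp_apply]]
      rw [S_comp_mulRight_sinv, LinearMap.rTensor_comp, LinearMap.comp_apply]
      rw [LinearMap.comp_apply, LinearMap.lTensor_tmul, LinearMap.flip_apply]
      rw [show N2map H (p ⊗ₜ[ℂ] (H.T1 q d)) =
          mulFirst A (p ⊗ₜ[ℂ] (LinearMap.rTensor A H.S (H.T1 q d))) from ?_]
      · rw [mulFirst_tmul']
      · simp [N2map]
  rw [← LinearMap.comp_apply, e1, LinearMap.comp_apply, ← H.coassoc c a d]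
  have e2 : ∀ t : A ⊗[ℂ] A,
      N2map H ((TensorProduct.assoc ℂ A A A) (LinearMap.rTensor A (H.T2 c) t)) =
        c ⊗ₜ[ℂ] (sliceL H.counit t) := by
    intro t
    induction t using TensorProduct.induction_on with
    | zero => simp [N2map]
    | tmul r s =>
      rw [LinearMap.rTensor_tmul, N2map_assoc, H.S_T2]
      simp [smul_tmul']
    | add t₁ t₂ h₁ h₂ => simp only [map_add, h₁, h₂, tmul_add]
  rw [e2 (H.T1 a d), H.counit_T1]
  simp

/-- `φ ∘ ψ = id` at the level of `A ⊗ A`:  `T2(K(c ⊗ a)) = c ⊗ a`. -/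
theorem T2_Kmap (c a : A) :
    TensorProduct.lift H.T2 (Kmap H (c ⊗ₜ[ℂ] a)) = c ⊗ₜ[ℂ] a := by
  refine eq_of_forall_lTensor_mulRight H.nondegL fun d => ?_
  have e1 : LinearMap.lTensor A (LinearMap.mulRight ℂ d) ∘ₗ TensorProduct.lift H.T2 =
      mulFirst A ∘ₗ LinearMap.lTensor A (H.T1.flip d) :=
    TensorProduct.ext' fun u v => by
      rw [LinearMap.comp_apply, TensorProduct.lift.tmul, rhI3, LinearMap.comp_apply,
        LinearMap.lTensor_tmul, LinearMap.flip_apply, mulFirst_tmul']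
  rw [← LinearMap.comp_apply, e1, LinearMap.comp_apply, Kmap_tmul]
  have e3 : LinearMap.lTensor A (H.T1.flip d) (LinearMap.rTensor A H.S (H.T3 a (H.Sinv c))) =
      TensorProduct.map H.S (H.T1.flip d) (H.T3 a (H.Sinv c)) := by
    rw [← LinearMap.comp_apply]
    congr 1
    exact TensorProduct.ext' fun α β => by simp
  rw [e3, show mulFirst A (TensorProduct.map H.S (H.T1.flip d) (H.T3 a (H.Sinv c))) =
      NdMap H d (H.T3 a (H.Sinv c)) from rfl]
  rw [rhGid, H.S_Sinv]
  simp

end AuxHopf2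

section AuxHopf3

variable {A : Type*} [NonUnitalRing A] [Module ℂ A] [SMulCommClass ℂ A A]
  [IsScalarTower ℂ A A]
variable (H : RegMultHopf (A := A))

theorem span_mul_top (hc : ∃ a₀ : A, H.counit a₀ = 1) (v : A) :
    v ∈ Submodule.span ℂ {y : A | ∃ p q : A, p * q = y} := by
  obtain ⟨a₀, ha₀⟩ := hc
  obtain ⟨t, ht⟩ := H.T2_bij.2 (v ⊗ₜ[ℂ] a₀)
  have hv : sliceR H.counit (TensorProduct.lift H.T2 t) = v := by
    rw [ht, sliceR_tmul, ha₀, one_smul]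
  rw [← hv]
  clear hv ht
  induction t using TensorProduct.induction_on with
  | zero => simpa using Submodule.zero_mem _
  | tmul c d' =>
    rw [TensorProduct.lift.tmul, H.counit_T2]
    exact Submodule.subset_span ⟨c, d', rfl⟩
  | add t₁ t₂ h₁ h₂ =>
    rw [map_add, map_add]
    exact Submodule.add_mem _ h₁ h₂

theorem span_prod_right (hc : ∃ a₀ : A, H.counit a₀ = 1) :
    Submodule.span ℂ {w : A ⊗[ℂ] A | ∃ p y q : A, p ⊗ₜ[ℂ] (y * q) = w} = ⊤ := by
  rw [Submodule.eq_top_iff']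
  intro w
  induction w using TensorProduct.induction_on with
  | zero => exact Submodule.zero_mem _
  | tmul p z =>
    refine Submodule.span_induction
      (p := fun z _ => p ⊗ₜ[ℂ] z ∈
        Submodule.span ℂ {w : A ⊗[ℂ] A | ∃ p y q : A, p ⊗ₜ[ℂ] (y * q) = w})
      ?_ ?_ ?_ ?_ (span_mul_top H hc z)
    · rintro y ⟨y₁, q₁, rfl⟩; exact Submodule.subset_span ⟨p, y₁, q₁, rfl⟩
    · show p ⊗ₜ[ℂ] (0 : A) ∈ _
      rw [tmul_zero]; exact Submodule.zero_mem _
    · intro x y _ _ hx hy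
      show p ⊗ₜ[ℂ] (x + y) ∈ _
      rw [tmul_add]; exact Submodule.add_mem _ hx hy
    · intro r x _ hx
      show p ⊗ₜ[ℂ] (r • x) ∈ _
      rw [tmul_smul]; exact Submodule.smul_mem _ _ hx
  | add w₁ w₂ h₁ h₂ => exact Submodule.add_mem _ h₁ h₂

/-- The comultiplication `β ↦ Δ(β)`, acting by left multiplication on `A ⊗ A`,
as a linear map. -/
def DL : A →ₗ[ℂ] (A ⊗[ℂ] A) →ₗ[ℂ] (A ⊗[ℂ] A) where
  toFun β := (H.Δ β).L
  map_add' β β' := by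
    show (H.Δ (β + β')).L = (H.Δ β).L + (H.Δ β').L
    rw [H.Δ_add]; rfl
  map_smul' r β := by
    show (H.Δ (r • β)).L = r • (H.Δ β).L
    rw [H.Δ_smul]; rfl

/-- The operator-valued map `α ⊗ β ↦ (u ↦ (S(α) ⊗ 1)(Δ(β) u))`. -/
def XiOp : A ⊗[ℂ] A →ₗ[ℂ] (A ⊗[ℂ] A) →ₗ[ℂ] (A ⊗[ℂ] A) :=
  TensorProduct.lift
    (LinearMap.mk₂ ℂ
      (fun α β => LinearMap.rTensor A (LinearMap.mulLeft ℂ (H.S α)) ∘ₗ DL H β)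
      (fun α α' β => LinearMap.ext fun w => by
        have hm : LinearMap.mulLeft ℂ (H.S (α + α')) =
            LinearMap.mulLeft ℂ (H.S α) + LinearMap.mulLeft ℂ (H.S α') := by
          ext t; simp [map_add, add_mul]
        simp only [LinearMap.comp_apply, LinearMap.add_apply, hm]
        exact rTensor_add_map _ _ _)
      (fun r α β => LinearMap.ext fun w => by
        have hm : LinearMap.mulLeft ℂ (H.S (r • α)) = r • LinearMap.mulLeft ℂ (H.S α) := by
          ext t; simp [map_smul, smul_mul_assoc]
        simp only [LinearMap.comp_apply, LinearMap.smul_apply, hm]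
        exact rTensor_smul_map _ _ _)
      (fun α β β' => LinearMap.ext fun w => by
        simp only [LinearMap.comp_apply, LinearMap.add_apply, map_add])
      (fun r α β => LinearMap.ext fun w => by
        simp only [LinearMap.comp_apply, LinearMap.smul_apply, map_smul]))

theorem XiOp_tmul (α β : A) :
    XiOp H (α ⊗ₜ[ℂ] β) =
      LinearMap.rTensor A (LinearMap.mulLeft ℂ (H.S α)) ∘ₗ DL H β := by
  simp [XiOp]

theorem XiOp_T3 (hc : ∃ a₀ : A, H.counit a₀ = 1) (h ch : A) :
    XiOp H (H.T3 h ch) =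
      LinearMap.rTensor A (LinearMap.mulLeft ℂ (H.S ch)) ∘ₗ
        LinearMap.lTensor A (LinearMap.mulLeft ℂ h) := by
  refine LinearMap.ext_on (span_prod_right H hc) ?_
  rintro w ⟨p, y, q, rfl⟩
  have e : ∀ t : A ⊗[ℂ] A,
      (XiOp H t) (p ⊗ₜ[ℂ] (y * q)) = tmulMul A (NdMap H y t) (p ⊗ₜ[ℂ] q) := by
    intro t
    induction t using TensorProduct.induction_on with
    | zero => simp
    | tmul α β =>
      rw [XiOp_tmul, LinearMap.comp_apply]
      rw [show (p : A) ⊗ₜ[ℂ] (y * q) = LinearMap.lTensor A (LinearMap.mulLeft ℂ y) (p ⊗ₜ[ℂ] q) by simp]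
      rw [show DL H β (LinearMap.lTensor A (LinearMap.mulLeft ℂ y) (p ⊗ₜ[ℂ] q)) =
          tmulMul A (H.T1 β y) (p ⊗ₜ[ℂ] q) from (H.T1_spec β y _).symm]
      rw [← tm_rTensor_mulLeft_left, NdMap_tmul]
    | add t₁ t₂ h₁ h₂ => simp only [map_add, LinearMap.add_apply, h₁, h₂]
  rw [e (H.T3 h ch), rhGid]
  rw [LinearMap.comp_apply, LinearMap.lTensor_tmul, LinearMap.rTensor_tmul]
  simp [mul_assoc]

theorem rhHI2 (hc : ∃ a₀ : A, H.counit a₀ = 1) (h a' d : A) :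
    NdMap H d (H.T1 h a') =
      LinearMap.lTensor A (LinearMap.mulLeft ℂ h) (H.T1 a' d) := by
  refine eq_of_forall_rTensor_mulLeft H.nondegR fun c'' => ?_
  have s1 : LinearMap.rTensor A (LinearMap.mulLeft ℂ c'') ∘ₗ NdMap H d =
      NdMap H d ∘ₗ LinearMap.rTensor A (LinearMap.mulRight ℂ (H.Sinv c'')) :=
    TensorProduct.ext' fun v q => by
      rw [LinearMap.comp_apply, NdMap_tmul, LinearMap.comp_apply, LinearMap.rTensor_tmul,
        LinearMap.mulRight_apply, NdMap_tmul]
      rw [← LinearMap.comp_apply (LinearMap.rTensor A (LinearMap.mulLeft ℂ c'')),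
        ← LinearMap.rTensor_comp]
      congr 2
      ext t
      simp [H.S_mul, H.S_Sinv, mul_assoc]
  rw [← LinearMap.comp_apply, s1, LinearMap.comp_apply, ← rhI4 H h (H.Sinv c'') a']
  have s3 : ∀ t : A ⊗[ℂ] A,
      NdMap H d (LinearMap.lTensor A (LinearMap.mulRight ℂ a') t) =
        (XiOp H t) (H.T1 a' d) := by
    intro t
    induction t using TensorProduct.induction_on with
    | zero => simp
    | tmul α β =>
      rw [LinearMap.lTensor_tmul, LinearMap.mulRight_apply, NdMap_tmul, rhI11,
        XiOp_tmul, LinearMap.comp_apply]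
      rfl
    | add t₁ t₂ h₁ h₂ => simp only [map_add, LinearMap.add_apply, h₁, h₂]
  rw [s3, XiOp_T3 H hc, H.S_Sinv, LinearMap.comp_apply]

end AuxHopf3

section AuxHopf4

variable {A : Type*} [NonUnitalRing A] [Module ℂ A] [SMulCommClass ℂ A A]
  [IsScalarTower ℂ A A]

theorem lTensor_add_map {X : Type*} [AddCommGroup X] [Module ℂ X]
    (f g : A →ₗ[ℂ] A) (w : X ⊗[ℂ] A) :
    LinearMap.lTensor X (f + g) w = LinearMap.lTensor X f w + LinearMap.lTensor X g w := by
  induction w using TensorProduct.induction_on with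
  | zero => simp
  | tmul x y => simp [tmul_add]
  | add u v hu hv => simp only [map_add, hu, hv]; abel

theorem lTensor_smul_map {X : Type*} [AddCommGroup X] [Module ℂ X]
    (r : ℂ) (f : A →ₗ[ℂ] A) (w : X ⊗[ℂ] A) :
    LinearMap.lTensor X (r • f) w = r • LinearMap.lTensor X f w := by
  induction w using TensorProduct.induction_on with
  | zero => simp
  | tmul x y => simp [tmul_smul]
  | add u v hu hv => simp only [map_add, hu, hv, smul_add]

theorem assoc_symm_lTensor_lTensor (g : A →ₗ[ℂ] A) (W : A ⊗[ℂ] (A ⊗[ℂ] A)) :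
    (TensorProduct.assoc ℂ A A A).symm (LinearMap.lTensor A (LinearMap.lTensor A g) W) =
      LinearMap.lTensor (A ⊗[ℂ] A) g ((TensorProduct.assoc ℂ A A A).symm W) := by
  induction W using TensorProduct.induction_on with
  | zero => simp
  | tmul x u =>
    induction u using TensorProduct.induction_on with
    | zero => simp
    | tmul p q => simp
    | add u₁ u₂ h₁ h₂ => simp only [tmul_add, map_add, h₁, h₂]
  | add W₁ W₂ h₁ h₂ => simp only [map_add, h₁, h₂]

theorem eq_of_forall_lastleg
    (hL : ∀ a : A, (∀ b : A, a * b = 0) → a = 0)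
    {v w : A ⊗[ℂ] (A ⊗[ℂ] A)}
    (h : ∀ d, LinearMap.lTensor A (LinearMap.lTensor A (LinearMap.mulRight ℂ d)) v =
      LinearMap.lTensor A (LinearMap.lTensor A (LinearMap.mulRight ℂ d)) w) : v = w := by
  have h2 : ∀ d, LinearMap.lTensor (A ⊗[ℂ] A) (LinearMap.mulRight ℂ d)
      ((TensorProduct.assoc ℂ A A A).symm v) =
      LinearMap.lTensor (A ⊗[ℂ] A) (LinearMap.mulRight ℂ d)
      ((TensorProduct.assoc ℂ A A A).symm w) := by
    intro d
    rw [← assoc_symm_lTensor_lTensor, ← assoc_symm_lTensor_lTensor, h d]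
  have := eq_of_forall_lTensor_mulRight (X := A ⊗[ℂ] A) hL h2
  calc v = (TensorProduct.assoc ℂ A A A) ((TensorProduct.assoc ℂ A A A).symm v) := by simp
    _ = (TensorProduct.assoc ℂ A A A) ((TensorProduct.assoc ℂ A A A).symm w) := by rw [this]
    _ = w := by simp

variable (H : RegMultHopf (A := A))

/-- `s ↦ (1 ⊗ s)·w` for a fixed `w : A ⊗ A`, as a linear map. -/
def gHat (w : A ⊗[ℂ] A) : A →ₗ[ℂ] A ⊗[ℂ] A where
  toFun s := LinearMap.lTensor A (LinearMap.mulLeft ℂ s) w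
  map_add' s s' := by
    show LinearMap.lTensor A (LinearMap.mulLeft ℂ (s + s')) w = _
    rw [show LinearMap.mulLeft ℂ (s + s') = LinearMap.mulLeft ℂ s + LinearMap.mulLeft ℂ s'
      from LinearMap.ext fun t => add_mul s s' t]
    exact lTensor_add_map _ _ _
  map_smul' r s := by
    show LinearMap.lTensor A (LinearMap.mulLeft ℂ (r • s)) w =
      r • LinearMap.lTensor A (LinearMap.mulLeft ℂ s) w
    rw [show LinearMap.mulLeft ℂ (r • s) = r • LinearMap.mulLeft ℂ s
      from LinearMap.ext fun t => smul_mul_assoc r s t]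
    exact lTensor_smul_map _ _ _

theorem gHat_apply (w : A ⊗[ℂ] A) (s : A) :
    gHat w s = LinearMap.lTensor A (LinearMap.mulLeft ℂ s) w := rfl

/-- The central Hopf-algebra identity behind Proposition 5.12:
`Σ c a₍₁₎ b ⊗ (S(a₍₂₎) ⊗ 1)Δ(a₍₃₎a') = Σ c a₍₁₎ b ⊗ (1 ⊗ a₍₂₎)Δ(a')`. -/
theorem rhHI (hc : ∃ a₀ : A, H.counit a₀ = 1) (a a' b c : A) :
    TensorProduct.map (LinearMap.mulLeft ℂ c) (TensorProduct.lift (H.T2 ∘ₗ H.S))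
      ((TensorProduct.assoc ℂ A A A) (LinearMap.rTensor A (H.T3.flip b) (H.T1 a a'))) =
    TensorProduct.map (LinearMap.mulRight ℂ b) (H.T4.flip a') (H.T2 c a) := by
  refine eq_of_forall_lastleg H.nondegL fun d => ?_
  have sB : LinearMap.lTensor A (LinearMap.mulRight ℂ d) ∘ₗ
      TensorProduct.lift (H.T2 ∘ₗ H.S) = NdMap H d :=
    TensorProduct.ext' fun v q => by
      rw [LinearMap.comp_apply, TensorProduct.lift.tmul, LinearMap.comp_apply, rhI3,
        NdMap_tmul]
  have sA : LinearMap.lTensor A (LinearMap.lTensor A (LinearMap.mulRight ℂ d))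
      (TensorProduct.map (LinearMap.mulLeft ℂ c) (TensorProduct.lift (H.T2 ∘ₗ H.S))
        ((TensorProduct.assoc ℂ A A A) (LinearMap.rTensor A (H.T3.flip b) (H.T1 a a')))) =
      TensorProduct.map (LinearMap.mulLeft ℂ c) (NdMap H d)
        ((TensorProduct.assoc ℂ A A A) (LinearMap.rTensor A (H.T3.flip b) (H.T1 a a'))) := by
    rw [show TensorProduct.map (LinearMap.mulLeft ℂ c) (NdMap H d) =
        LinearMap.lTensor A (LinearMap.lTensor A (LinearMap.mulRight ℂ d)) ∘ₗ
          TensorProduct.map (LinearMap.mulLeft ℂ c) (TensorProduct.lift (H.T2 ∘ₗ H.S)) from ?_]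
    · rw [LinearMap.comp_apply]
    · refine (TensorProduct.ext' fun u t => ?_).symm
      rw [LinearMap.comp_apply, TensorProduct.map_tmul, TensorProduct.map_tmul,
        LinearMap.lTensor_tmul, ← sB, LinearMap.comp_apply]
  rw [sA, rhC3 H a b a']
  have sC : TensorProduct.map (LinearMap.mulLeft ℂ c) (NdMap H d)
      (LinearMap.lTensor A (H.T1.flip a') (H.T3 a b)) =
      TensorProduct.map (LinearMap.mulLeft ℂ c) (gHat (H.T1 a' d)) (H.T3 a b) := by
    rw [← LinearMap.comp_apply]
    refine LinearMap.congr_fun (TensorProduct.ext' fun u' v' => ?_) (H.T3 a b)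
    rw [LinearMap.comp_apply, LinearMap.lTensor_tmul, TensorProduct.map_tmul,
      TensorProduct.map_tmul, LinearMap.flip_apply, rhHI2 H hc, gHat_apply]
  rw [sC]
  have sD : LinearMap.lTensor A (LinearMap.lTensor A (LinearMap.mulRight ℂ d))
      (TensorProduct.map (LinearMap.mulRight ℂ b) (H.T4.flip a') (H.T2 c a)) =
      TensorProduct.map (LinearMap.mulRight ℂ b) (gHat (H.T1 a' d)) (H.T2 c a) := by
    rw [← LinearMap.comp_apply]
    refine LinearMap.congr_fun (TensorProduct.ext' fun e s => ?_) (H.T2 c a)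
    rw [LinearMap.comp_apply, TensorProduct.map_tmul, TensorProduct.map_tmul,
      LinearMap.lTensor_tmul, LinearMap.flip_apply, rhI10, gHat_apply]
  rw [sD]
  have h1 : TensorProduct.map (LinearMap.mulLeft ℂ c) (gHat (H.T1 a' d)) =
      TensorProduct.map LinearMap.id (gHat (H.T1 a' d)) ∘ₗ
        LinearMap.rTensor A (LinearMap.mulLeft ℂ c) :=
    TensorProduct.ext' fun x y => by
      simp [TensorProduct.map_tmul]
  have h2 : TensorProduct.map (LinearMap.mulRight ℂ b) (gHat (H.T1 a' d)) =
      TensorProduct.map LinearMap.id (gHat (H.T1 a' d)) ∘ₗ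
        LinearMap.rTensor A (LinearMap.mulRight ℂ b) :=
    TensorProduct.ext' fun x y => by
      simp [TensorProduct.map_tmul]
  rw [h1, h2, LinearMap.comp_apply, LinearMap.comp_apply, rhI5]

end AuxHopf4

section AuxR

variable {A : Type*} [NonUnitalRing A] [Module ℂ A] [SMulCommClass ℂ A A]
  [IsScalarTower ℂ A A]
variable {R : Type*} [AddCommGroup R] [Module ℂ R]
variable {mulR : R →ₗ[ℂ] R →ₗ[ℂ] R}

/-- `g ↦ (· γ(g))`, the right-multiplication part of `γ`, as a bilinear map. -/
def gammaR (γ : A →ₗ[ℂ] MulPair mulR) : A →ₗ[ℂ] R →ₗ[ℂ] R where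
  toFun g := (γ g).R
  map_add' g g' := by
    show (γ (g + g')).R = (γ g).R + (γ g').R
    rw [map_add]; rfl
  map_smul' r g := by
    show (γ (r • g)).R = r • (γ g).R
    rw [map_smul]; rfl

/-- `x ⊗ p ↦ x γ(p)`. -/
def ebar (γ : A →ₗ[ℂ] MulPair mulR) : R ⊗[ℂ] A →ₗ[ℂ] R :=
  TensorProduct.lift (gammaR γ).flip

@[simp] theorem ebar_tmul (γ : A →ₗ[ℂ] MulPair mulR) (x : R) (p : A) :
    ebar γ (x ⊗ₜ[ℂ] p) = (γ p).R x := by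
  simp [ebar, gammaR]

/-- `x ⊗ (p ⊗ q) ↦ (x γ(p)) ⊗ q`. -/
def Mmap (γ : A →ₗ[ℂ] MulPair mulR) : R ⊗[ℂ] (A ⊗[ℂ] A) →ₗ[ℂ] R ⊗[ℂ] A :=
  LinearMap.rTensor A (ebar γ) ∘ₗ (TensorProduct.assoc ℂ R A A).symm.toLinearMap

@[simp] theorem Mmap_tmul (γ : A →ₗ[ℂ] MulPair mulR) (x : R) (p q : A) :
    Mmap γ (x ⊗ₜ[ℂ] (p ⊗ₜ[ℂ] q)) = ((γ p).R x) ⊗ₜ[ℂ] q := by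
  simp [Mmap]

theorem Mmap_lift (γ : A →ₗ[ℂ] MulPair mulR) (x : R) (w : A ⊗[ℂ] A) :
    Mmap γ (x ⊗ₜ[ℂ] w) = TensorProduct.lift (multTensorPair γ x) w := by
  induction w using TensorProduct.induction_on with
  | zero => simp
  | tmul p q => simp [multTensorPair]; rfl
  | add w₁ w₂ h₁ h₂ => rw [tmul_add, map_add, h₁, h₂, map_add]

theorem Mmap_nat (γ : A →ₗ[ℂ] MulPair mulR) (g : A →ₗ[ℂ] A) (x : R) (w : A ⊗[ℂ] A) :
    LinearMap.lTensor R g (Mmap γ (x ⊗ₜ[ℂ] w)) =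
      Mmap γ (x ⊗ₜ[ℂ] LinearMap.lTensor A g w) := by
  induction w using TensorProduct.induction_on with
  | zero => simp
  | tmul p q => simp
  | add w₁ w₂ h₁ h₂ => rw [tmul_add, map_add, map_add, h₁, h₂, map_add, tmul_add, map_add]

theorem Mmap_absorb (γ : A →ₗ[ℂ] MulPair mulR)
    (hγmul : ∀ a a' : A, γ (a * a') = γ a * γ a')
    (z : R) (p : A) (w : A ⊗[ℂ] A) :
    Mmap γ (z ⊗ₜ[ℂ] LinearMap.rTensor A (LinearMap.mulLeft ℂ p) w) =
      Mmap γ (((γ p).R z) ⊗ₜ[ℂ] w) := by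
  induction w using TensorProduct.induction_on with
  | zero => simp
  | tmul r s =>
    rw [LinearMap.rTensor_tmul, LinearMap.mulLeft_apply, Mmap_tmul, Mmap_tmul, hγmul,
      MulPair.mul_R, LinearMap.comp_apply]
  | add w₁ w₂ h₁ h₂ => rw [map_add, tmul_add, map_add, h₁, h₂, tmul_add, map_add]

end AuxR

section AuxHopf5

variable {A : Type*} [NonUnitalRing A] [Module ℂ A] [SMulCommClass ℂ A A]
  [IsScalarTower ℂ A A]
variable (H : RegMultHopf (A := A))

theorem rhI4S (p q d : A) :
    LinearMap.lTensor A (LinearMap.mulRight ℂ d)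
        (LinearMap.rTensor A H.S (H.T3 q (H.Sinv p))) =
      LinearMap.rTensor A (LinearMap.mulLeft ℂ p) (LinearMap.rTensor A H.S (H.T1 q d)) := by
  rw [← rT_lT_comm, rhI4]
  rw [show LinearMap.rTensor A H.S
      (LinearMap.rTensor A (LinearMap.mulRight ℂ (H.Sinv p)) (H.T1 q d)) =
      LinearMap.rTensor A (H.S ∘ₗ LinearMap.mulRight ℂ (H.Sinv p)) (H.T1 q d) by
    rw [LinearMap.rTensor_comp, LinearMap.comp_apply]]
  rw [S_comp_mulRight_sinv, LinearMap.rTensor_comp, LinearMap.comp_apply]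

end AuxHopf5

end AuxAll

/-! ## STATEMENT 9 -/

noncomputable section

/-- The bilinear map `(p, q) ↦ γ(p) x γ(S(q))` expressing innerness
`a ▷ x = Σ γ(a₍₁₎) x γ(S(a₍₂₎))` in covered form (`x = γ(b)x₀`, using
`T3 a b = Δ(a)(b ⊗ 1) = Σ a₍₁₎b ⊗ a₍₂₎`). -/
def innerActPair {A : Type*} [NonUnitalRing A] [Module ℂ A] [SMulCommClass ℂ A A]
    [IsScalarTower ℂ A A] {R : Type*} [AddCommGroup R] [Module ℂ R]
    (H : RegMultHopf (A := A)) {mulR : R →ₗ[ℂ] R →ₗ[ℂ] R}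
    (γ : A →ₗ[ℂ] MulPair mulR) (x : R) :
    A →ₗ[ℂ] A →ₗ[ℂ] R :=
  LinearMap.mk₂ ℂ (fun p q => (γ (H.S q)).R ((γ p).L x))
    (fun p p' q => by simp)
    (fun c p q => by simp)
    (fun p q q' => by simp)
    (fun c p q => by simp)

/-- **Proposition 5.12.** If the action of `A` on `R` is inner, i.e., there is
a unital homomorphism `γ : A → M(R)` with
`a ▷ x = Σ γ(a₍₁₎) x γ(S(a₍₂₎))`, then the smash product `R # A` is isomorphic
to the ordinary tensor product algebra `R ⊗ A`, via
`φ(x # a) = Σ xγ(a₍₁₎) ⊗ a₍₂₎` with inverse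
`ψ(x ⊗ a) = Σ xγ(S(a₍₁₎)) # a₍₂₎` (both written in covered form, on elements
`x γ(c)`). -/
theorem inner_action_smash_iso_tensor
    {A : Type*} [NonUnitalRing A] [Module ℂ A] [SMulCommClass ℂ A A]
    [IsScalarTower ℂ A A] {R : Type*} [AddCommGroup R] [Module ℂ R]
    (H : RegMultHopf (A := A)) (mulR : R →ₗ[ℂ] R →ₗ[ℂ] R)
    (act : A →ₗ[ℂ] R →ₗ[ℂ] R) (hMA : IsModAlg H mulR act)
    (μ : (R ⊗[ℂ] A) →ₗ[ℂ] (R ⊗[ℂ] A) →ₗ[ℂ] (R ⊗[ℂ] A))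
    (hμ : IsSmashMul H mulR act μ)
    (ν : (R ⊗[ℂ] A) →ₗ[ℂ] (R ⊗[ℂ] A) →ₗ[ℂ] (R ⊗[ℂ] A))
    (hν : ∀ (x x' : R) (a a' : A),
      ν (x ⊗ₜ[ℂ] a) (x' ⊗ₜ[ℂ] a') = mulR x x' ⊗ₜ[ℂ] (a * a'))
    (γ : A →ₗ[ℂ] MulPair mulR)
    (hγmul : ∀ a a' : A, γ (a * a') = γ a * γ a')
    (hγL : Submodule.span ℂ {y : R | ∃ a x, (γ a).L x = y} = ⊤)
    (hγR : Submodule.span ℂ {y : R | ∃ a x, (γ a).R x = y} = ⊤)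
    (hinner : ∀ (a b : A) (x : R),
      act a ((γ b).L x) = TensorProduct.lift (innerActPair H γ x) (H.T3 a b)) :
    ∃ φ ψ : (R ⊗[ℂ] A) →ₗ[ℂ] R ⊗[ℂ] A,
      (∀ (x : R) (c a : A),
        φ ((γ c).R x ⊗ₜ[ℂ] a) =
          TensorProduct.lift (multTensorPair γ x) (H.T2 c a)) ∧
      (∀ (x : R) (c a : A),
        ψ ((γ c).R x ⊗ₜ[ℂ] a) =
          TensorProduct.lift (multTensorPair γ x)
            (LinearMap.rTensor A H.S (H.T3 a (H.Sinv c)))) ∧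
      (∀ u, φ (ψ u) = u) ∧ (∀ u, ψ (φ u) = u) ∧
      ∀ u v, φ (μ u v) = ν (φ u) (φ v) := by
  classical
  by_cases hc : ∃ a₀ : A, H.counit a₀ = 1
  · -- Non-degenerate case.
    have hspan1 : Submodule.span ℂ
        {t : R ⊗[ℂ] A | ∃ c x a, ((γ c).R x) ⊗ₜ[ℂ] a = t} = ⊤ := by
      rw [Submodule.eq_top_iff']
      intro w
      induction w using TensorProduct.induction_on with
      | zero => exact Submodule.zero_mem _
      | tmul xt a =>
        have hx : xt ∈ Submodule.span ℂ {y : R | ∃ c x, (γ c).R x = y} := by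
          rw [hγR]; exact Submodule.mem_top
        refine Submodule.span_induction
          (p := fun y _ => y ⊗ₜ[ℂ] a ∈ Submodule.span ℂ
            {t : R ⊗[ℂ] A | ∃ c x a, ((γ c).R x) ⊗ₜ[ℂ] a = t})
          ?_ ?_ ?_ ?_ hx
        · rintro y ⟨c, x, rfl⟩; exact Submodule.subset_span ⟨c, x, a, rfl⟩
        · show (0 : R) ⊗ₜ[ℂ] a ∈ _
          rw [zero_tmul]; exact Submodule.zero_mem _
        · intro y₁ y₂ _ _ h1 h2
          show (y₁ + y₂) ⊗ₜ[ℂ] a ∈ _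
          rw [add_tmul]; exact Submodule.add_mem _ h1 h2
        · intro r y _ h1
          show (r • y) ⊗ₜ[ℂ] a ∈ _
          rw [← smul_tmul']; exact Submodule.smul_mem _ _ h1
      | add w₁ w₂ h₁ h₂ => exact Submodule.add_mem _ h₁ h₂
    have hspan2 : Submodule.span ℂ
        {t : R ⊗[ℂ] A | ∃ b z a', ((γ b).L z) ⊗ₜ[ℂ] a' = t} = ⊤ := by
      rw [Submodule.eq_top_iff']
      intro w
      induction w using TensorProduct.induction_on with
      | zero => exact Submodule.zero_mem _
      | tmul xt a =>
        have hx : xt ∈ Submodule.span ℂ {y : R | ∃ b z, (γ b).L z = y} := by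
          rw [hγL]; exact Submodule.mem_top
        refine Submodule.span_induction
          (p := fun y _ => y ⊗ₜ[ℂ] a ∈ Submodule.span ℂ
            {t : R ⊗[ℂ] A | ∃ b z a', ((γ b).L z) ⊗ₜ[ℂ] a' = t})
          ?_ ?_ ?_ ?_ hx
        · rintro y ⟨b, z, rfl⟩; exact Submodule.subset_span ⟨b, z, a, rfl⟩
        · show (0 : R) ⊗ₜ[ℂ] a ∈ _
          rw [zero_tmul]; exact Submodule.zero_mem _
        · intro y₁ y₂ _ _ h1 h2
          show (y₁ + y₂) ⊗ₜ[ℂ] a ∈ _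
          rw [add_tmul]; exact Submodule.add_mem _ h1 h2
        · intro r y _ h1
          show (r • y) ⊗ₜ[ℂ] a ∈ _
          rw [← smul_tmul']; exact Submodule.smul_mem _ _ h1
      | add w₁ w₂ h₁ h₂ => exact Submodule.add_mem _ h₁ h₂
    have hMsurj : LinearMap.range (Mmap γ) = ⊤ := by
      rw [← top_le_iff, ← hspan1, Submodule.span_le]
      rintro t ⟨c, x, a, rfl⟩
      exact ⟨x ⊗ₜ[ℂ] (c ⊗ₜ[ℂ] a), by simp⟩
    obtain ⟨σ, hσ⟩ := (Mmap γ).exists_rightInverse_of_surjective hMsurj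
    have hW1 : ∀ (d : A) (v : R ⊗[ℂ] (A ⊗[ℂ] A)),
        LinearMap.lTensor R (LinearMap.mulRight ℂ d)
          (Mmap γ (LinearMap.lTensor R (TensorProduct.lift H.T2) v)) =
        Mmap γ (LinearMap.lTensor R (H.T1.flip d) (Mmap γ v)) := by
      intro d v
      induction v using TensorProduct.induction_on with
      | zero => simp
      | tmul x t =>
        induction t using TensorProduct.induction_on with
        | zero => simp
        | tmul p q =>
          rw [LinearMap.lTensor_tmul, TensorProduct.lift.tmul,
            Mmap_nat γ (LinearMap.mulRight ℂ d) x (H.T2 p q), rhI3,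
            Mmap_absorb γ hγmul, Mmap_tmul, LinearMap.lTensor_tmul,
            LinearMap.flip_apply]
        | add t₁ t₂ h₁ h₂ =>
          rw [tmul_add]
          simp only [map_add, h₁, h₂]
      | add v₁ v₂ h₁ h₂ => simp only [map_add, h₁, h₂]
    have hW1K : ∀ (d : A) (v : R ⊗[ℂ] (A ⊗[ℂ] A)),
        LinearMap.lTensor R (LinearMap.mulRight ℂ d)
          (Mmap γ (LinearMap.lTensor R (Kmap H) v)) =
        Mmap γ (LinearMap.lTensor R (LinearMap.rTensor A H.S ∘ₗ H.T1.flip d) (Mmap γ v)) := by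
      intro d v
      induction v using TensorProduct.induction_on with
      | zero => simp
      | tmul x t =>
        induction t using TensorProduct.induction_on with
        | zero => simp
        | tmul p q =>
          rw [LinearMap.lTensor_tmul, Kmap_tmul,
            Mmap_nat γ (LinearMap.mulRight ℂ d) x _, rhI4S,
            Mmap_absorb γ hγmul, Mmap_tmul, LinearMap.lTensor_tmul,
            LinearMap.comp_apply, LinearMap.flip_apply]
        | add t₁ t₂ h₁ h₂ =>
          rw [tmul_add]
          simp only [map_add, h₁, h₂]
      | add v₁ v₂ h₁ h₂ => simp only [map_add, h₁, h₂]
    have hkerL : ∀ v, Mmap γ v = 0 →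
        Mmap γ (LinearMap.lTensor R (TensorProduct.lift H.T2) v) = 0 := by
      intro v hv
      refine zero_of_lTensor_mulRight H.nondegL _ fun d => ?_
      rw [hW1 d v, hv, map_zero, map_zero]
    have hkerK : ∀ v, Mmap γ v = 0 →
        Mmap γ (LinearMap.lTensor R (Kmap H) v) = 0 := by
      intro v hv
      refine zero_of_lTensor_mulRight H.nondegL _ fun d => ?_
      rw [hW1K d v, hv, map_zero, map_zero]
    set φ : (R ⊗[ℂ] A) →ₗ[ℂ] R ⊗[ℂ] A :=
      Mmap γ ∘ₗ LinearMap.lTensor R (TensorProduct.lift H.T2) ∘ₗ σ with hφdef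
    set ψ : (R ⊗[ℂ] A) →ₗ[ℂ] R ⊗[ℂ] A :=
      Mmap γ ∘ₗ LinearMap.lTensor R (Kmap H) ∘ₗ σ with hψdef
    have hσ' : ∀ u, Mmap γ (σ u) = u := by
      intro u
      have := LinearMap.congr_fun hσ u
      simpa using this
    have hφM : ∀ v, φ (Mmap γ v) =
        Mmap γ (LinearMap.lTensor R (TensorProduct.lift H.T2) v) := by
      intro v
      have h0 : Mmap γ (σ (Mmap γ v) - v) = 0 := by
        rw [map_sub, hσ', sub_self]
      have h1 := hkerL _ h0
      rw [map_sub, map_sub, sub_eq_zero] at h1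
      rw [hφdef]
      simpa using h1
    have hψM : ∀ v, ψ (Mmap γ v) =
        Mmap γ (LinearMap.lTensor R (Kmap H) v) := by
      intro v
      have h0 : Mmap γ (σ (Mmap γ v) - v) = 0 := by
        rw [map_sub, hσ', sub_self]
      have h1 := hkerK _ h0
      rw [map_sub, map_sub, sub_eq_zero] at h1
      rw [hψdef]
      simpa using h1
    have hφchar : ∀ (x : R) (c a : A),
        φ ((γ c).R x ⊗ₜ[ℂ] a) = Mmap γ (x ⊗ₜ[ℂ] H.T2 c a) := by
      intro x c a
      have : ((γ c).R x) ⊗ₜ[ℂ] a = Mmap γ (x ⊗ₜ[ℂ] (c ⊗ₜ[ℂ] a)) := by simp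
      rw [this, hφM]
      rw [LinearMap.lTensor_tmul, TensorProduct.lift.tmul]
    have hψchar : ∀ (x : R) (c a : A),
        ψ ((γ c).R x ⊗ₜ[ℂ] a) = Mmap γ (x ⊗ₜ[ℂ] Kmap H (c ⊗ₜ[ℂ] a)) := by
      intro x c a
      have : ((γ c).R x) ⊗ₜ[ℂ] a = Mmap γ (x ⊗ₜ[ℂ] (c ⊗ₜ[ℂ] a)) := by simp
      rw [this, hψM, LinearMap.lTensor_tmul]
    have hνM : ∀ (y : R) (s : A) (x'' : R) (w : A ⊗[ℂ] A),
        ν (y ⊗ₜ[ℂ] s) (Mmap γ (x'' ⊗ₜ[ℂ] w)) =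
        Mmap γ ((mulR y x'') ⊗ₜ[ℂ] (LinearMap.lTensor A (LinearMap.mulLeft ℂ s) w)) := by
      intro y s x'' w
      induction w using TensorProduct.induction_on with
      | zero => simp
      | tmul r t =>
        rw [Mmap_tmul, hν, LinearMap.lTensor_tmul, LinearMap.mulLeft_apply, Mmap_tmul,
          (γ r).R_mul y x'']
      | add w₁ w₂ h₁ h₂ =>
        rw [tmul_add, map_add, map_add, h₁, h₂, map_add, tmul_add, map_add]
    have hF : ∀ (y : R) (s a'' : A) (xt : R),
        ν (y ⊗ₜ[ℂ] s) (φ (xt ⊗ₜ[ℂ] a'')) =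
        Mmap γ ((mulR y xt) ⊗ₜ[ℂ] H.T4 s a'') := by
      intro y s a''
      have hmaps : (ν (y ⊗ₜ[ℂ] s)) ∘ₗ φ ∘ₗ ((TensorProduct.mk ℂ R A).flip a'') =
          Mmap γ ∘ₗ ((TensorProduct.mk ℂ R (A ⊗[ℂ] A)).flip (H.T4 s a'')) ∘ₗ (mulR y) := by
        refine LinearMap.ext_on hγR ?_
        rintro xt ⟨c', x', rfl⟩
        simp only [LinearMap.comp_apply, LinearMap.flip_apply, TensorProduct.mk_apply]
        rw [hφchar x' c' a'', hνM, rhI8 H s c' a'', Mmap_absorb γ hγmul,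
          (γ c').R_mul y x']
      intro xt
      have := LinearMap.congr_fun hmaps xt
      simpa using this
    refine ⟨φ, ψ, ?_, ?_, ?_, ?_, ?_⟩
    · intro x c a
      rw [hφchar, Mmap_lift]
    · intro x c a
      rw [hψchar, Kmap_tmul, Mmap_lift]
    · intro u
      have hKL : LinearMap.lTensor R (TensorProduct.lift H.T2)
          (LinearMap.lTensor R (Kmap H) (σ u)) = σ u := by
        rw [← LinearMap.comp_apply, ← LinearMap.lTensor_comp,
          show TensorProduct.lift H.T2 ∘ₗ Kmap H = LinearMap.id from
            TensorProduct.ext' fun c a => by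
              rw [LinearMap.comp_apply, T2_Kmap H c a, LinearMap.id_apply],
          LinearMap.lTensor_id, LinearMap.id_apply]
      conv_lhs => rw [← hσ' u]
      rw [hψM, hφM, hKL, hσ' u]
    · intro u
      have hLK : LinearMap.lTensor R (Kmap H)
          (LinearMap.lTensor R (TensorProduct.lift H.T2) (σ u)) = σ u := by
        rw [← LinearMap.comp_apply, ← LinearMap.lTensor_comp,
          show Kmap H ∘ₗ TensorProduct.lift H.T2 = LinearMap.id from
            TensorProduct.ext' fun c a => by
              rw [LinearMap.comp_apply, TensorProduct.lift.tmul, Kmap_T2 H c a,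
                LinearMap.id_apply],
          LinearMap.lTensor_id, LinearMap.id_apply]
      conv_lhs => rw [← hσ' u]
      rw [hφM, hψM, hLK, hσ' u]
    · intro u v
      suffices hbil : LinearMap.compr₂ μ φ = (LinearMap.compl₂ ν φ) ∘ₗ φ by
        have h := LinearMap.congr_fun (LinearMap.congr_fun hbil u) v
        simpa using h
      refine LinearMap.ext_on hspan1 ?_
      rintro u₁ ⟨c, x, a, rfl⟩
      refine LinearMap.ext_on hspan2 ?_
      rintro v₁ ⟨b, z, a', rfl⟩
      simp only [LinearMap.compr₂_apply, LinearMap.comp_apply, LinearMap.compl₂_apply]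
      rw [hμ]
      set ρ : A →ₗ[ℂ] R := (mulR.flip z) ∘ₗ ((gammaR γ).flip x) with hρ
      have hρa : ∀ g : A, ρ g = mulR ((γ g).R x) z := fun g => rfl
      set Λ : A ⊗[ℂ] (A ⊗[ℂ] A) →ₗ[ℂ] R ⊗[ℂ] A :=
        Mmap γ ∘ₗ LinearMap.rTensor (A ⊗[ℂ] A) ρ with hΛ
      have hΛa : ∀ (g : A) (w : A ⊗[ℂ] A),
          Λ (g ⊗ₜ[ℂ] w) = Mmap γ ((mulR ((γ g).R x) z) ⊗ₜ[ℂ] w) := by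
        intro g w
        rw [hΛ, LinearMap.comp_apply, LinearMap.rTensor_tmul, hρa]
      have hstep : ∀ (q : A) (s' : A ⊗[ℂ] A),
          φ (mulR ((γ c).R x) (TensorProduct.lift (innerActPair H γ z) s') ⊗ₜ[ℂ] q) =
          Λ (TensorProduct.map (LinearMap.mulLeft ℂ c) (TensorProduct.lift (H.T2 ∘ₗ H.S))
            ((TensorProduct.assoc ℂ A A A) (s' ⊗ₜ[ℂ] q))) := by
        intro q s'
        induction s' using TensorProduct.induction_on with
        | zero => simp
        | tmul u' v' =>
          rw [show TensorProduct.lift (innerActPair H γ z) (u' ⊗ₜ[ℂ] v') =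
              (γ (H.S v')).R ((γ u').L z) from by simp [innerActPair]]
          rw [← (γ (H.S v')).R_mul ((γ c).R x) ((γ u').L z)]
          rw [hφchar _ (H.S v') q]
          rw [(γ u').middle ((γ c).R x) z]
          rw [show (γ u').R ((γ c).R x) = (γ (c * u')).R x from by
            rw [hγmul]; rfl]
          rw [TensorProduct.assoc_tmul, TensorProduct.map_tmul, hΛa,
            TensorProduct.lift.tmul, LinearMap.comp_apply, LinearMap.mulLeft_apply]
        | add s₁ s₂ h₁ h₂ =>
          simp only [map_add, add_tmul, LinearMap.add_apply, h₁, h₂]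
      have hLam : ∀ t : A ⊗[ℂ] A,
          φ (TensorProduct.lift (smashPair mulR act ((γ c).R x) ((γ b).L z)) t) =
          Λ (TensorProduct.map (LinearMap.mulLeft ℂ c) (TensorProduct.lift (H.T2 ∘ₗ H.S))
            ((TensorProduct.assoc ℂ A A A) (LinearMap.rTensor A (H.T3.flip b) t))) := by
        intro t
        induction t using TensorProduct.induction_on with
        | zero => simp
        | tmul p q =>
          rw [TensorProduct.lift.tmul]
          rw [show smashPair mulR act ((γ c).R x) ((γ b).L z) p q =
              mulR ((γ c).R x) (act p ((γ b).L z)) ⊗ₜ[ℂ] q from rfl]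
          rw [hinner p b z, LinearMap.rTensor_tmul, LinearMap.flip_apply]
          exact hstep q (H.T3 p b)
        | add t₁ t₂ h₁ h₂ => simp only [map_add, h₁, h₂]
      rw [hLam (H.T1 a a')]
      have hRc : ∀ t : A ⊗[ℂ] A,
          ν (Mmap γ (x ⊗ₜ[ℂ] t)) (φ (((γ b).L z) ⊗ₜ[ℂ] a')) =
          Λ (TensorProduct.map (LinearMap.mulRight ℂ b) (H.T4.flip a') t) := by
        intro t
        induction t using TensorProduct.induction_on with
        | zero => simp
        | tmul e s =>
          rw [Mmap_tmul, hF ((γ e).R x) s a' ((γ b).L z)]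
          rw [(γ b).middle ((γ e).R x) z]
          rw [show (γ b).R ((γ e).R x) = (γ (e * b)).R x from by
            rw [hγmul]; rfl]
          rw [TensorProduct.map_tmul, LinearMap.mulRight_apply, LinearMap.flip_apply,
            hΛa]
        | add t₁ t₂ h₁ h₂ =>
          rw [tmul_add, map_add, map_add, LinearMap.add_apply, h₁, h₂, map_add, map_add]
      rw [hφchar x c a, hRc (H.T2 c a), ← rhHI H hc a a' b c]
  · -- Degenerate case: `A = 0` and `R = 0`.
    have hε : ∀ a : A, H.counit a = 0 := by
      intro a
      by_contra hne
      exact hc ⟨(H.counit a)⁻¹ • a, by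
        rw [map_smul, smul_eq_mul, inv_mul_cancel₀ hne]⟩
    have hA : ∀ a : A, a = 0 := by
      intro a
      refine H.nondegL a fun b => ?_
      rw [← H.counit_T1 a b, show H.counit = 0 from LinearMap.ext hε]
      simp [sliceL]
    have hR0 : ∀ y : R, y = 0 := by
      intro y
      have hy : y ∈ Submodule.span ℂ {y : R | ∃ a x, act a x = y} := by
        rw [hMA.unital]; exact Submodule.mem_top
      refine Submodule.span_induction (p := fun y _ => y = 0) ?_ rfl ?_ ?_ hy
      · rintro y ⟨a, x, rfl⟩
        rw [hA a, map_zero, LinearMap.zero_apply]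
      · intro x y _ _ hx hy; rw [hx, hy, add_zero]
      · intro r x _ hx; rw [hx, smul_zero]
    have hRA : ∀ w : R ⊗[ℂ] A, w = 0 := by
      intro w
      induction w using TensorProduct.induction_on with
      | zero => rfl
      | tmul x a => rw [hR0 x, zero_tmul]
      | add u v hu hv => rw [hu, hv, add_zero]
    exact ⟨0, 0, fun x c a => (hRA _).trans (hRA _).symm,
      fun x c a => (hRA _).trans (hRA _).symm,
      fun u => (hRA _).trans (hRA _).symm,
      fun u => (hRA _).trans (hRA _).symm,
      fun u v => (hRA _).trans (hRA _).symm⟩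


end
end

section
/- Let (A, B) be a pairing of regular multiplier Hopf algebras, with B a left A-module algebra via a ▷ b = Σ ⟨a, b₍₂₎⟩b₍₁₎, and extend this action of A to the multiplier algebra M(B). Then the only fixed points in M(B), i.e., elements m ∈ M(B) with a ▷ m = ε(a)m for all a ∈ A, are the scalar multiples of the identity 1 ∈ M(B). -/
/-! # A framework for (regular) multiplier Hopf algebras, following
Drabant–Van Daele–Zhang, "Actions of Multiplier Hopf Algebras".

Algebras are (possibly non-unital) associative algebras over `ℂ` with
non-degenerate product.  A multiplier of such an algebra (whose multiplication
is recorded as a bilinear map `mul`) is a pair `(L, R)` of linear maps with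
`L (x*y) = L x * y`, `R (x*y) = x * R y` and `x * L y = R x * y`; this is the
standard description of the multiplier algebra `M(A)`.

A regular multiplier Hopf algebra is recorded by the comultiplication
`Δ : A → M(A ⊗ A)` together with the four canonical maps
`T1 a b = Δ(a)(1 ⊗ b)`, `T2 a b = (a ⊗ 1)Δ(b)`, `T3 a b = Δ(a)(b ⊗ 1)`,
`T4 a b = (1 ⊗ a)Δ(b)` (all with values in `A ⊗ A`), which are required to be
bijective as maps of `A ⊗ A`; together with the counit and the (bijective)
antipode satisfying the usual axioms, expressed in covered (Sweedler) form. -/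

open scoped TensorProduct
open TensorProduct LinearMap

/-! ## STATEMENT 14 -/

noncomputable section

section AuxSlices

variable {M N : Type*} [AddCommGroup M] [Module ℂ M] [AddCommGroup N] [Module ℂ N]

theorem sliceL_sliceR_comm (f : N →ₗ[ℂ] ℂ) (g : M →ₗ[ℂ] ℂ) (u : M ⊗[ℂ] N) :
    f (sliceL g u) = g (sliceR f u) := by
  induction u using TensorProduct.induction_on with
  | zero => simp
  | tmul m n => simp [mul_comm]
  | add p q hp hq => simp [hp, hq]

theorem sliceR_rTensor_s14 (f : N →ₗ[ℂ] ℂ) (g : M →ₗ[ℂ] M) (u : M ⊗[ℂ] N) :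
    sliceR f (LinearMap.rTensor N g u) = g (sliceR f u) := by
  induction u using TensorProduct.induction_on with
  | zero => simp
  | tmul m n => simp
  | add p q hp hq => simp [hp, hq]

theorem sliceL_rTensor (f : M →ₗ[ℂ] ℂ) (g : M →ₗ[ℂ] M) (u : M ⊗[ℂ] N) :
    sliceL f (LinearMap.rTensor N g u) = sliceL (f ∘ₗ g) u := by
  induction u using TensorProduct.induction_on with
  | zero => simp
  | tmul m n => simp
  | add p q hp hq => simp [hp, hq]

theorem lTensor_rTensor_comm (f : N →ₗ[ℂ] N) (g : M →ₗ[ℂ] M) (u : M ⊗[ℂ] N) :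
    LinearMap.lTensor M f (LinearMap.rTensor N g u) =
      LinearMap.rTensor N g (LinearMap.lTensor M f u) := by
  induction u using TensorProduct.induction_on with
  | zero => simp
  | tmul m n => simp
  | add p q hp hq => simp [hp, hq]

theorem sliceL_smul_fun (c : ℂ) (f : M →ₗ[ℂ] ℂ) (u : M ⊗[ℂ] N) :
    sliceL (c • f) u = c • sliceL f u := by
  induction u using TensorProduct.induction_on with
  | zero => simp
  | tmul m n => simp [smul_smul]
  | add p q hp hq => simp [hp, hq]

theorem tensor_left_dual_eq_zero (u : M ⊗[ℂ] N)
    (h : ∀ g : M →ₗ[ℂ] ℂ, sliceL g u = 0) : u = 0 := by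
  let bm := Module.Basis.ofVectorSpace ℂ M
  let bn := Module.Basis.ofVectorSpace ℂ N
  have key : ∀ (v : M ⊗[ℂ] N) (i) (j), (bm.tensorProduct bn).repr v (i, j) =
      bn.repr (sliceL (bm.coord i) v) j := by
    intro v i j
    induction v using TensorProduct.induction_on with
    | zero => simp
    | tmul mm nn =>
        simp [Module.Basis.tensorProduct_repr_tmul_apply, Module.Basis.coord_apply, mul_comm]
    | add p q hp hq => simp [hp, hq]
  have hrep : (bm.tensorProduct bn).repr u = 0 := by
    ext ij
    obtain ⟨i, j⟩ := ij
    rw [key u i j, h (bm.coord i)]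
    simp
  exact (LinearEquiv.map_eq_zero_iff _).mp hrep

theorem slice_eq_zero {ι : Sort*} (F : ι → (N →ₗ[ℂ] ℂ))
    (hsep : ∀ n : N, (∀ i, F i n = 0) → n = 0) (u : M ⊗[ℂ] N)
    (h : ∀ i, sliceR (F i) u = 0) : u = 0 := by
  apply tensor_left_dual_eq_zero
  intro g
  apply hsep
  intro i
  rw [sliceL_sliceR_comm, h i, map_zero]

end AuxSlices

section AuxB

variable {B : Type*} [NonUnitalRing B] [Module ℂ B] [SMulCommClass ℂ B B]
  [IsScalarTower ℂ B B]

theorem tmulMul_lTensor_mulRight (z : B) (w u : B ⊗[ℂ] B) :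
    tmulMul B (LinearMap.lTensor B (LinearMap.mulRight ℂ z) w) u =
      tmulMul B w (LinearMap.lTensor B (LinearMap.mulLeft ℂ z) u) := by
  induction w using TensorProduct.induction_on with
  | zero => simp
  | tmul p q =>
      induction u using TensorProduct.induction_on with
      | zero => simp
      | tmul s t => simp [mul_assoc]
      | add a b ha hb =>
          simp only [map_add]
          rw [ha, hb]
  | add a b ha hb =>
      simp only [map_add, LinearMap.add_apply]
      rw [ha, hb]

theorem tmulMul_rTensor_mulRight (y : B) (w u : B ⊗[ℂ] B) :
    tmulMul B (LinearMap.rTensor B (LinearMap.mulRight ℂ y) w) u =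
      tmulMul B w (LinearMap.rTensor B (LinearMap.mulLeft ℂ y) u) := by
  induction w using TensorProduct.induction_on with
  | zero => simp
  | tmul p q =>
      induction u using TensorProduct.induction_on with
      | zero => simp
      | tmul s t => simp [mul_assoc]
      | add a b ha hb =>
          simp only [map_add]
          rw [ha, hb]
  | add a b ha hb =>
      simp only [map_add, LinearMap.add_apply]
      rw [ha, hb]

theorem sliceR_tmulMul (g : B →ₗ[ℂ] ℂ) (w : B ⊗[ℂ] B) (x y : B) :
    sliceR g (tmulMul B w (x ⊗ₜ[ℂ] y)) =
      sliceR (g ∘ₗ LinearMap.mulRight ℂ y) w * x := by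
  induction w using TensorProduct.induction_on with
  | zero => simp
  | tmul p q => simp [smul_mul_assoc]
  | add a b ha hb =>
      simp only [map_add, LinearMap.add_apply]
      rw [ha, hb, ← add_mul, ← map_add]

theorem tmulMul_nondeg (hnd : ∀ b : B, (∀ c : B, b * c = 0) → b = 0)
    (w : B ⊗[ℂ] B) (hw : ∀ u, tmulMul B w u = 0) : w = 0 := by
  apply slice_eq_zero
    (F := fun p : (B →ₗ[ℂ] ℂ) × B => p.1 ∘ₗ LinearMap.mulRight ℂ p.2)
  · intro n hn
    apply hnd
    intro y
    exact (Module.forall_dual_apply_eq_zero_iff ℂ (n * y)).mp fun g => by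
      simpa using hn (g, y)
  · rintro ⟨g, y⟩
    apply hnd
    intro x
    rw [← sliceR_tmulMul, hw, map_zero]

theorem rTensor_mulRight_eq_zero (hnd : ∀ b : B, (∀ c : B, b * c = 0) → b = 0)
    (v : B ⊗[ℂ] B)
    (hv : ∀ y : B, LinearMap.rTensor B (LinearMap.mulRight ℂ y) v = 0) : v = 0 := by
  apply slice_eq_zero (F := fun g : B →ₗ[ℂ] ℂ => g)
  · intro n hn
    exact (Module.forall_dual_apply_eq_zero_iff ℂ n).mp hn
  · intro g
    apply hnd
    intro y
    have := congrArg (sliceR g) (hv y)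
    rw [sliceR_rTensor_s14, map_zero] at this
    simpa using this

end AuxB

/-- **Proposition 6.5.** For a pairing `(A, B)` of regular multiplier Hopf
algebras, with `B` a left `A`-module algebra via `a ▷ b = Σ ⟨a, b₍₂₎⟩b₍₁₎`
and the action extended to `M(B)`, the only fixed points `m ∈ M(B)` (i.e.
`a ▷ m = ε(a)m` for all `a`; equivalently `a ▷ (mx) = m(a ▷ x)` and
`a ▷ (xm) = (a ▷ x)m` for all `a ∈ A`, `x ∈ B`) are the scalar multiples of
the identity `1 ∈ M(B)`. -/
theorem pairing_fixed_points_trivial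
    {A B : Type*} [NonUnitalRing A] [Module ℂ A] [SMulCommClass ℂ A A]
    [IsScalarTower ℂ A A] [NonUnitalRing B] [Module ℂ B] [SMulCommClass ℂ B B]
    [IsScalarTower ℂ B B]
    (HA : RegMultHopf (A := A)) (HB : RegMultHopf (A := B))
    (P : MHAPairing HA HB) (m : MulPair (LinearMap.mul ℂ B)) :
    ((∀ (a : A) (x : B), P.lA a (m.L x) = m.L (P.lA a x)) ∧
        ∀ (a : A) (x : B), P.lA a (m.R x) = m.R (P.lA a x)) ↔
      ∃ c : ℂ, m = c • (1 : MulPair (LinearMap.mul ℂ B)) := by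
  constructor
  · rintro ⟨h1, -⟩
    by_cases hε : ∃ x : B, HB.counit x ≠ 0
    · obtain ⟨e₀, he₀⟩ := hε
      set e : B := (HB.counit e₀)⁻¹ • e₀ with he_def
      have hee : HB.counit e = 1 := by
        simp [he_def, inv_mul_cancel₀ he₀]
      set c : ℂ := HB.counit (m.R e) with hc
      have hφ : ∀ y : B, HB.counit (m.L y) = c * HB.counit y := by
        intro y
        have hm := m.middle e y
        simp only [LinearMap.mul_apply'] at hm
        have h2 := congrArg HB.counit hm
        rw [HB.counit_mul, HB.counit_mul, hee, one_mul] at h2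
        exact h2
      have hIV : ∀ x y : B,
          HB.T3 (m.L x) y = LinearMap.rTensor B m.L (HB.T3 x y) := by
        intro x y
        have h0 : ∀ a : A,
            sliceR (P.β a)
              (HB.T3 (m.L x) y - LinearMap.rTensor B m.L (HB.T3 x y)) = 0 := by
          intro a
          have hLmul := m.L_mul (P.lA a x) y
          simp only [LinearMap.mul_apply'] at hLmul
          rw [map_sub, sliceR_rTensor_s14, P.lA_leg, P.lA_leg, h1, hLmul, sub_self]
        exact sub_eq_zero.mp
          (slice_eq_zero (fun a : A => P.β a) (fun n hn => P.nondegB n hn) _ h0)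
      have hG : ∀ (b y z : B),
          LinearMap.lTensor B (LinearMap.mulRight ℂ z) (HB.T3 b y) =
            LinearMap.rTensor B (LinearMap.mulRight ℂ y) (HB.T1 b z) := by
        intro b y z
        refine sub_eq_zero.mp (tmulMul_nondeg HB.nondegL _ fun u => ?_)
        rw [map_sub, LinearMap.sub_apply, tmulMul_lTensor_mulRight,
          tmulMul_rTensor_mulRight, HB.T3_spec, HB.T1_spec,
          lTensor_rTensor_comm, sub_self]
      have hcomp : ∀ y : B,
          (LinearMap.mulRight ℂ y) ∘ₗ m.L = m.L ∘ₗ (LinearMap.mulRight ℂ y) := by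
        intro y
        ext q
        have hLmul := m.L_mul q y
        simp only [LinearMap.mul_apply'] at hLmul
        simp [hLmul]
      have hV : ∀ x z : B,
          HB.T1 (m.L x) z = LinearMap.rTensor B m.L (HB.T1 x z) := by
        intro x z
        refine sub_eq_zero.mp (rTensor_mulRight_eq_zero HB.nondegL _ fun y => ?_)
        have e2 : LinearMap.rTensor B (LinearMap.mulRight ℂ y)
              (LinearMap.rTensor B m.L (HB.T1 x z)) =
            LinearMap.lTensor B (LinearMap.mulRight ℂ z)
              (LinearMap.rTensor B m.L (HB.T3 x y)) := by
          rw [← LinearMap.comp_apply, ← LinearMap.rTensor_comp, hcomp,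
            LinearMap.rTensor_comp, LinearMap.comp_apply, ← hG,
            ← lTensor_rTensor_comm]
        rw [map_sub, e2, ← hG, hIV x y, sub_self]
      have hL : ∀ x : B, m.L x = c • x := by
        intro x
        have key : ∀ z : B, (m.L x - c • x) * z = 0 := by
          intro z
          have h3 := HB.counit_T1 (m.L x) z
          rw [hV, sliceL_rTensor] at h3
          have hfe : (HB.counit ∘ₗ m.L) = c • HB.counit := by
            ext y
            simp [hφ y]
          rw [hfe, sliceL_smul_fun, HB.counit_T1] at h3
          rw [sub_mul, ← h3, smul_mul_assoc, sub_self]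
        exact sub_eq_zero.mp (HB.nondegL _ key)
      have hR : ∀ x : B, m.R x = c • x := by
        intro x
        have key : ∀ y : B, (m.R x - c • x) * y = 0 := by
          intro y
          have hm := m.middle x y
          simp only [LinearMap.mul_apply'] at hm
          rw [hL y, mul_smul_comm] at hm
          rw [sub_mul, ← hm, smul_mul_assoc, sub_self]
        exact sub_eq_zero.mp (HB.nondegL _ key)
      refine ⟨c, ?_⟩
      ext x
      · rw [hL x]; simp
      · rw [hR x]; simp
    · push_neg at hε
      have hB0 : ∀ b : B, b = 0 := by
        intro b
        apply HB.nondegL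
        intro z
        have h3 := HB.counit_T1 b z
        have hε0 : HB.counit = (0 : B →ₗ[ℂ] ℂ) := LinearMap.ext hε
        rw [← h3, hε0]
        simp [sliceL]
      exact ⟨0, by ext x
                   · exact (hB0 _).trans (hB0 _).symm
                   · exact (hB0 _).trans (hB0 _).symm⟩
  · rintro ⟨c, rfl⟩
    constructor <;> intro a x <;> simp [map_smul]

end
end
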